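/- arXiv:1906.05316 — 6 statements merged into one kernel-verified Lean document; each statement's English description precedes it below -/
import Mathlib

section
/- Let (π, T) be as above, t = −Te, α ∈ (0,1], and define f(x) = x^{α−1} π E_{α,α}(T x^α) t for x > 0, where E_{α,β}(A) = Σ_{k≥0} A^k / Γ(αk + β) is the matrix Mittag-Leffler function. Then for all sufficiently large u > 0, ∫_0^∞ e^{-ux} f(x) dx = π (u^α I − T)^{-1} t. -/
open MeasureTheory Matrix

/-- The matrix Mittag-Leffler function `E_{α,β}(A) = Σ_{k≥0} A^k / Γ(αk+β)`. -/
noncomputable def matrixML {p : ℕ} (α β : ℝ) (A : Matrix (Fin p) (Fin p) ℝ) :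
    Matrix (Fin p) (Fin p) ℝ :=
  ∑' k : ℕ, (Real.Gamma (α * k + β))⁻¹ • A ^ k

/-!
Expanding `E_{α,β}(x^α T)` as its defining series, the `k`-th term of the integrand is
`π T^k t · x^(αk+β-1) e^(-ux) / Γ(αk+β)`, whose integral over `(0, ∞)` is `π T^k t · u^(-(αk+β))`.
The series converges for every `x` because `Γ(s) ≥ e^(-M) M^(s-1)` for `s ≥ 1` and every `M > 0`.
When `u^α` exceeds the spectral radius of `T` (which is that of `-T`), Gelfand's formula makes
`Σ ‖T^k‖ u^(-αk)` converge; this justifies exchanging sum and integral, and the resulting Neumann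
series sums to `u^(-β) Σ (T / u^α)^k = u^(α-β) (u^α I - T)⁻¹`.
-/

open Filter Set

namespace Real

theorem exp_neg_mul_rpow_le_Gamma {s M : ℝ} (hs : 1 ≤ s) (hM : 0 < M) :
    exp (-M) * M ^ (s - 1) ≤ Gamma s := by
  have hint : IntegrableOn (fun x => exp (-x) * x ^ (s - 1)) (Ioi 0) :=
    GammaIntegral_convergent (by linarith)
  have hsub : Ioi M ⊆ Ioi 0 := Ioi_subset_Ioi hM.le
  calc exp (-M) * M ^ (s - 1) = ∫ x in Ioi M, exp (-x) * M ^ (s - 1) := by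
        rw [integral_mul_const, integral_exp_neg_Ioi]
    _ ≤ ∫ x in Ioi M, exp (-x) * x ^ (s - 1) := by
        refine setIntegral_mono_on ((integrableOn_exp_neg_Ioi M).mul_const _)
          (hint.mono_set hsub) measurableSet_Ioi fun x hx => ?_
        exact mul_le_mul_of_nonneg_left (rpow_le_rpow hM.le (le_of_lt hx) (by linarith))
          (exp_pos _).le
    _ ≤ ∫ x in Ioi 0, exp (-x) * x ^ (s - 1) := by
        refine setIntegral_mono_set hint ?_ (Eventually.of_forall hsub)
        filter_upwards [self_mem_ae_restrict measurableSet_Ioi] with x hx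
        exact mul_nonneg (exp_pos _).le (rpow_nonneg (le_of_lt hx) _)
    _ = Gamma s := (Gamma_eq_integral (by linarith)).symm

theorem summable_pow_div_Gamma {α : ℝ} (hα : 0 < α) (β r : ℝ) :
    Summable fun k : ℕ => r ^ k / Gamma (α * k + β) := by
  set M := (2 * |r| + 1) ^ α⁻¹
  have hM : 0 < M := by positivity
  have hMα : M ^ α = 2 * |r| + 1 := rpow_inv_rpow (by positivity) hα.ne'
  have hlarge : ∀ᶠ k : ℕ in atTop, 1 ≤ α * k + β :=
    ((tendsto_natCast_atTop_atTop.const_mul_atTop hα).atTop_add tendsto_const_nhds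
      ).eventually_ge_atTop 1
  refine (summable_geometric_two.mul_left (exp M * M ^ (1 - β))).of_norm_bounded_eventually_nat ?_
  filter_upwards [hlarge] with k hk
  have hΓ := exp_neg_mul_rpow_le_Gamma hk hM
  have hpos : 0 < exp (-M) * M ^ (α * k + β - 1) := by positivity
  have hsplit : M ^ (α * k + β - 1) = (M ^ α) ^ k * (M ^ (1 - β))⁻¹ := by
    rw [← rpow_natCast, ← rpow_mul hM.le, ← rpow_neg hM.le, ← rpow_add hM]
    ring_nf
  have hratio : |r| / M ^ α ≤ 1 / 2 := by
    rw [hMα, div_le_iff₀ (by positivity)]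
    linarith
  rw [norm_div, norm_pow, norm_eq_abs, norm_eq_abs, abs_of_pos (hpos.trans_le hΓ)]
  calc |r| ^ k / Gamma (α * k + β) ≤ |r| ^ k / (exp (-M) * M ^ (α * k + β - 1)) :=
        div_le_div_of_nonneg_left (by positivity) hpos hΓ
    _ = exp M * M ^ (1 - β) * (|r| / M ^ α) ^ k := by
        rw [hsplit, exp_neg, div_pow]
        field_simp
    _ ≤ exp M * M ^ (1 - β) * (1 / 2) ^ k := by gcongr

end Real

theorem summable_Gamma_inv_smul_pow {R : Type*} [NormedRing R] [NormedSpace ℝ R] [CompleteSpace R]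
    {α : ℝ} (hα : 0 < α) (β : ℝ) (a : R) :
    Summable fun k : ℕ => (Real.Gamma (α * k + β))⁻¹ • a ^ k := by
  refine (Real.summable_pow_div_Gamma hα β ‖a‖).abs.of_norm_bounded_eventually_nat ?_
  filter_upwards [eventually_norm_pow_le a] with k hk
  rw [norm_smul, norm_inv, Real.norm_eq_abs, abs_div, abs_pow, abs_norm, div_eq_inv_mul]
  gcongr

theorem integral_exp_neg_mul_mul_tsum_div_Gamma {α β u : ℝ} (hα : 0 < α) (hβ : 0 < β)
    (hu : 0 < u) {c : ℕ → ℝ} (hc : Summable fun k => |c k| * (u ^ α)⁻¹ ^ k) :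
    ∫ x in Ioi 0, Real.exp (-u * x) *
        (x ^ (β - 1) * ∑' k : ℕ, c k * (x ^ α) ^ k / Real.Gamma (α * k + β))
      = u ^ (-β) * ∑' k : ℕ, c k * (u ^ α)⁻¹ ^ k := by
  set s : ℕ → ℝ := fun k => α * k + β
  have hs : ∀ k, 0 < s k := fun k => by positivity
  set F : ℕ → ℝ → ℝ := fun k x => c k / Real.Gamma (s k) * (x ^ (s k - 1) * Real.exp (-(u * x)))
  have hF : ∀ x ∈ Ioi (0 : ℝ), Real.exp (-u * x) *
      (x ^ (β - 1) * ∑' k : ℕ, c k * (x ^ α) ^ k / Real.Gamma (s k)) = ∑' k, F k x := by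
    intro x hx
    rw [← tsum_mul_left, ← tsum_mul_left]
    refine tsum_congr fun k => ?_
    have hsplit : x ^ (s k - 1) = x ^ (β - 1) * (x ^ α) ^ k := by
      rw [← Real.rpow_natCast, ← Real.rpow_mul (le_of_lt hx), ← Real.rpow_add hx]
      simp only [s]
      ring_nf
    simp only [F, hsplit, neg_mul]
    ring
  have hpow : ∀ k, u ^ (-s k) = u ^ (-β) * (u ^ α)⁻¹ ^ k := fun k => by
    rw [← Real.rpow_neg hu.le α, ← Real.rpow_natCast, ← Real.rpow_mul hu.le, ← Real.rpow_add hu]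
    simp only [s]
    ring_nf
  have hterm : ∀ k d, ∫ x in Ioi 0, d / Real.Gamma (s k) * (x ^ (s k - 1) * Real.exp (-(u * x)))
      = u ^ (-β) * (d * (u ^ α)⁻¹ ^ k) := fun k d => by
    rw [integral_const_mul, Real.integral_rpow_mul_exp_neg_mul_Ioi (hs k) hu, one_div,
      Real.inv_rpow hu.le, ← Real.rpow_neg hu.le, hpow]
    field_simp [(Real.Gamma_pos_of_pos (hs k)).ne']
  have hint : ∀ k, Integrable (F k) (volume.restrict (Ioi 0)) := fun k => by
    have h := integrableOn_rpow_mul_exp_neg_mul_rpow (by linarith [hs k] : -1 < s k - 1) one_pos hu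
    simp only [Real.rpow_one, neg_mul] at h
    exact Integrable.const_mul h _
  have hnorm : ∀ k, ∫ x in Ioi 0, ‖F k x‖ = u ^ (-β) * (|c k| * (u ^ α)⁻¹ ^ k) := fun k => by
    rw [← hterm k |c k|]
    refine setIntegral_congr_fun measurableSet_Ioi fun x (hx : 0 < x) => ?_
    have hx' : 0 ≤ x ^ (s k - 1) * Real.exp (-(u * x)) := by positivity
    rw [Real.norm_eq_abs, abs_mul, abs_div, abs_of_pos (Real.Gamma_pos_of_pos (hs k)),
      abs_of_nonneg hx']
  calc _ = ∫ x in Ioi 0, ∑' k, F k x := setIntegral_congr_fun measurableSet_Ioi hF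
    _ = ∑' k, ∫ x in Ioi 0, F k x := (integral_tsum_of_summable_integral_norm hint
          ((hc.mul_left _).congr fun k => (hnorm k).symm)).symm
    _ = _ := by rw [← tsum_mul_left]; exact tsum_congr fun k => hterm k (c k)

section Spectrum

variable {A : Type*} [NormedRing A] [NormedAlgebra ℂ A] [CompleteSpace A]

theorem spectralRadius_lt_ofReal_of_forall_norm_lt {a : A} {r : ℝ} (hr : 0 < r)
    (h : ∀ z ∈ spectrum ℂ a, ‖z‖ < r) : spectralRadius ℂ a < ENNReal.ofReal r := by
  rcases (spectrum ℂ a).eq_empty_or_nonempty with he | hne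
  · simp [spectralRadius, he, hr]
  · lift r to NNReal using hr.le
    rw [ENNReal.ofReal_coe_nnreal]
    exact spectrum.spectralRadius_lt_of_forall_lt_of_nonempty hne fun z hz => h z hz

theorem summable_norm_pow_div_of_spectralRadius_lt {a : A} {r : ℝ}
    (h : spectralRadius ℂ a < ENNReal.ofReal r) : Summable fun k : ℕ => ‖a ^ k‖ / r ^ k := by
  obtain ⟨q, -, hρq, hqr⟩ := ENNReal.lt_iff_exists_real_btwn.1 h
  have hq : 0 < q := ENNReal.ofReal_pos.1 (pos_of_gt hρq)
  have hqr' : q < r := (ENNReal.ofReal_lt_ofReal_iff'.1 hqr).1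
  have hr : 0 < r := hq.trans hqr'
  refine (summable_geometric_of_lt_one (by positivity) ((div_lt_one hr).2 hqr')
    ).of_norm_bounded_eventually_nat ?_
  filter_upwards [(spectrum.pow_norm_pow_one_div_tendsto_nhds_spectralRadius a).eventually_lt_const
    hρq, eventually_ge_atTop 1] with k hk hk1
  rw [ENNReal.ofReal_lt_ofReal_iff hq] at hk
  have hpow : ‖a ^ k‖ ≤ q ^ k :=
    calc ‖a ^ k‖ = (‖a ^ k‖ ^ (1 / (k : ℝ))) ^ k := by
          rw [one_div, Real.rpow_inv_natCast_pow (norm_nonneg _) (by omega)]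
      _ ≤ q ^ k := by gcongr
  rw [norm_div, norm_norm, Real.norm_eq_abs (r ^ k), abs_of_pos (by positivity), div_pow]
  gcongr

end Spectrum

namespace Matrix

variable {m n : Type*} [Fintype m] [Fintype n]

theorem inv_smul_one_sub_eq_smul_tsum [DecidableEq n] {K : Type*} [Field K] [TopologicalSpace K]
    [IsTopologicalRing K] [T2Space K] {A : Matrix n n K} {r : K} (hr : r ≠ 0)
    (h : Summable fun k : ℕ => (r⁻¹ • A) ^ k) :
    (r • 1 - A)⁻¹ = r⁻¹ • ∑' k : ℕ, (r⁻¹ • A) ^ k := by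
  refine inv_eq_right_inv ?_
  rw [mul_smul_comm, ← smul_mul_assoc, smul_sub, smul_smul, inv_mul_cancel₀ hr, one_smul]
  exact h.one_sub_mul_tsum_pow

theorem dotProduct_tsum_mulVec {ι R : Type*} [CommRing R] [TopologicalSpace R]
    [IsTopologicalRing R] [T2Space R] {f : ι → Matrix m n R} (hf : Summable f)
    (π : m → R) (t : n → R) :
    π ⬝ᵥ ((∑' k, f k) *ᵥ t) = ∑' k, π ⬝ᵥ (f k *ᵥ t) :=
  hf.map_tsum (AddMonoidHom.mk' (fun M : Matrix m n R => π ⬝ᵥ (M *ᵥ t))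
    fun M N => by simp [add_mulVec, dotProduct_add])
    (continuous_const.dotProduct (continuous_id.matrix_mulVec continuous_const))

end Matrix

section LinftyOpNorm

attribute [local instance] Matrix.linftyOpNormedAddCommGroup Matrix.linftyOpNormedRing
  Matrix.linftyOpNormedAlgebra Matrix.linftyOpNormedSpace

namespace Matrix

variable {m n : Type*} [Fintype m] [Fintype n]

theorem abs_dotProduct_mulVec_le (π : m → ℝ) (M : Matrix m n ℝ) (t : n → ℝ) :
    |π ⬝ᵥ (M *ᵥ t)| ≤ (∑ i, |π i|) * (‖M‖ * ‖t‖) := by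
  calc |π ⬝ᵥ (M *ᵥ t)| ≤ ∑ i, |π i| * |(M *ᵥ t) i| := by
        simpa only [dotProduct, abs_mul] using
          Finset.abs_sum_le_sum_abs (fun i => π i * (M *ᵥ t) i) Finset.univ
    _ ≤ ∑ i, |π i| * (‖M‖ * ‖t‖) := by
        gcongr with i
        exact (norm_le_pi_norm (M *ᵥ t) i).trans (linfty_opNorm_mulVec M t)
    _ = _ := (Finset.sum_mul ..).symm

theorem linfty_opNorm_map_ofReal (A : Matrix m n ℝ) : ‖A.map (Complex.ofReal ·)‖ = ‖A‖ := by
  simp [linfty_opNorm_def]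

theorem summable_norm_pow_inv_smul_of_spectralRadius_lt [DecidableEq n] {T : Matrix n n ℝ}
    {r : ℝ} (h : spectralRadius ℂ (T.map (Complex.ofReal ·)) < ENNReal.ofReal r) :
    Summable fun k : ℕ => ‖(r⁻¹ • T) ^ k‖ := by
  have hr : 0 < r := ENNReal.ofReal_pos.1 (pos_of_gt h)
  refine (summable_norm_pow_div_of_spectralRadius_lt h).congr fun k => ?_
  have hmap : (T.map (Complex.ofReal ·)) ^ k = (T ^ k).map (Complex.ofReal ·) :=
    (T.map_pow Complex.ofRealHom k).symm
  rw [hmap, linfty_opNorm_map_ofReal, smul_pow, norm_smul, Real.norm_eq_abs,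
    abs_of_pos (by positivity), inv_pow, div_eq_inv_mul]

end Matrix

theorem dotProduct_matrixML_smul_mulVec {p : ℕ} {α : ℝ} (hα : 0 < α) (β y : ℝ)
    (T : Matrix (Fin p) (Fin p) ℝ) (π t : Fin p → ℝ) :
    π ⬝ᵥ (matrixML α β (y • T) *ᵥ t)
      = ∑' k : ℕ, π ⬝ᵥ (T ^ k *ᵥ t) * y ^ k / Real.Gamma (α * k + β) := by
  -- Stated separately: inline, unifying the linfty-norm topology with the product topology
  -- of `Matrix` times out.
  have hsum : Summable fun k : ℕ => (Real.Gamma (α * k + β))⁻¹ • (y • T) ^ k :=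
    summable_Gamma_inv_smul_pow hα β _
  rw [matrixML, dotProduct_tsum_mulVec hsum]
  refine tsum_congr fun k => ?_
  simp only [smul_pow, smul_mulVec, dotProduct_smul, smul_eq_mul]
  ring

theorem integral_exp_neg_mul_rpow_mul_dotProduct_matrixML {p : ℕ} {α β u : ℝ} (hα : 0 < α)
    (hβ : 0 < β) (hu : 0 < u) {T : Matrix (Fin p) (Fin p) ℝ}
    (hT : spectralRadius ℂ (T.map (Complex.ofReal ·)) < ENNReal.ofReal (u ^ α))
    (π t : Fin p → ℝ) :
    ∫ x in Ioi 0, Real.exp (-u * x) * (x ^ (β - 1) * (π ⬝ᵥ (matrixML α β (x ^ α • T) *ᵥ t)))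
      = u ^ (α - β) * (π ⬝ᵥ ((u ^ α • 1 - T)⁻¹ *ᵥ t)) := by
  set S := (u ^ α)⁻¹ • T
  have hv : 0 < u ^ α := by positivity
  have hS : Summable fun k : ℕ => ‖S ^ k‖ :=
    Matrix.summable_norm_pow_inv_smul_of_spectralRadius_lt hT
  have hSk : ∀ k : ℕ, π ⬝ᵥ (S ^ k *ᵥ t) = π ⬝ᵥ (T ^ k *ᵥ t) * (u ^ α)⁻¹ ^ k := fun k => by
    rw [smul_pow, smul_mulVec, dotProduct_smul, smul_eq_mul, mul_comm]
  have hc : Summable fun k : ℕ => |π ⬝ᵥ (T ^ k *ᵥ t)| * (u ^ α)⁻¹ ^ k := by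
    refine ((hS.mul_right ‖t‖).mul_left (∑ i, |π i|)).of_nonneg_of_le (fun k => by positivity)
      fun k => ?_
    rw [← abs_of_pos (by positivity : 0 < (u ^ α)⁻¹ ^ k), ← abs_mul, ← hSk]
    exact abs_dotProduct_mulVec_le π _ t
  have hS' : Summable fun k : ℕ => S ^ k := hS.of_norm
  simp_rw [dotProduct_matrixML_smul_mulVec hα]
  rw [integral_exp_neg_mul_mul_tsum_div_Gamma hα hβ hu hc,
    inv_smul_one_sub_eq_smul_tsum hv.ne' hS', smul_mulVec, dotProduct_smul, smul_eq_mul,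
    dotProduct_tsum_mulVec hS', Real.rpow_sub hu, Real.rpow_neg hu.le]
  simp_rw [hSk]
  field_simp

theorem mml_density_laplace_general {p : ℕ} (α : ℝ) (hα : α ∈ Set.Ioc (0 : ℝ) 1)
    (T : Matrix (Fin p) (Fin p) ℝ)
    (π : Fin p → ℝ) :
    let t : Fin p → ℝ := -(T *ᵥ fun _ => 1)
    ∀ u : ℝ, 0 < u →
      (∀ z ∈ spectrum ℂ ((-T).map (Complex.ofReal ·)), ‖z‖ < u ^ α) →
      ∫ x in Set.Ioi (0 : ℝ),
          Real.exp (-u * x) * (x ^ (α - 1) * (π ⬝ᵥ (matrixML α α (x ^ α • T) *ᵥ t)))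
        = π ⬝ᵥ ((u ^ α • (1 : Matrix (Fin p) (Fin p) ℝ) - T)⁻¹ *ᵥ t) := by
  intro t u hu hspec
  have hT : spectralRadius ℂ (T.map (Complex.ofReal ·)) < ENNReal.ofReal (u ^ α) := by
    refine spectralRadius_lt_ofReal_of_forall_norm_lt (by positivity) fun z hz => ?_
    have hneg : -z ∈ spectrum ℂ ((-T).map (Complex.ofReal ·)) := by
      rw [Matrix.map_neg _ Complex.ofReal_neg, ← spectrum.neg_eq]
      exact Set.neg_mem_neg.2 hz
    simpa using hspec (-z) hneg
  simpa using integral_exp_neg_mul_rpow_mul_dotProduct_matrixML hα.1 hα.1 hu hT π t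

/-- For a phase-type generator `(π, T)` with exit vector `t = -Te` and
`α ∈ (0,1]`, the density `f(x) = x^(α-1) π E_{α,α}(T x^α) t` has Laplace transform
`π (u^α I - T)⁻¹ t` for all sufficiently large `u` (namely `u^α` beyond the spectral
radius of `-T`). -/
theorem mml_density_laplace {p : ℕ} (hp : 0 < p) (α : ℝ) (hα : α ∈ Set.Ioc (0 : ℝ) 1)
    (T : Matrix (Fin p) (Fin p) ℝ)
    (hoff : ∀ i j, i ≠ j → 0 ≤ T i j) (hdiag : ∀ i, T i i < 0)
    (hrow : ∀ i, ∑ j, T i j ≤ 0) (hinv : IsUnit T.det)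
    (π : Fin p → ℝ) (hπ : ∀ i, 0 ≤ π i) (hπ1 : ∑ i, π i = 1) :
    let t : Fin p → ℝ := -(T *ᵥ fun _ => 1)
    ∀ u : ℝ, 0 < u →
      (∀ z ∈ spectrum ℂ ((-T).map (Complex.ofReal ·)), ‖z‖ < u ^ α) →
      ∫ x in Set.Ioi (0 : ℝ),
          Real.exp (-u * x) * (x ^ (α - 1) * (π ⬝ᵥ (matrixML α α (x ^ α • T) *ᵥ t)))
        = π ⬝ᵥ ((u ^ α • (1 : Matrix (Fin p) (Fin p) ℝ) - T)⁻¹ *ᵥ t) :=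
  mml_density_laplace_general α hα T π

end LinftyOpNorm
end

section
/- Let (π, T) be a phase-type generator with exit vector t = −Te and α ∈ (0,1]. Define F(x) = 1 − π E_{α,1}(T x^α) e for x ≥ 0. Then F(0) = 0 and F′(x) = x^{α−1} π E_{α,α}(T x^α) t for x > 0; i.e. F is the cumulative distribution function of the MML(α, π, T) distribution. -/
open MeasureTheory Matrix

/-!
Expanding `E_{α,1}(x^α T) = ∑ x^{αk} Tᵏ / Γ(αk+1)` and differentiating termwise, the identity
`Γ(s+1) = s Γ(s)` turns each term into `x^{αk-1} Tᵏ / Γ(αk)`; the `k = 0` term vanishes and a shift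
of index gives `x^{α-1} E_{α,α}(x^α T) T`, and `T e = -t` fixes the sign. Termwise differentiation
is legitimate because `∑ rᵏ / Γ(αk+β)` converges for every `r`: by log-convexity of `Γ`,
`x^α Γ(x) ≤ 2 Γ(x+α)` for `x ≥ 1`, so the ratio test applies. This works in any Banach algebra;
matrices are one via the `ℓ∞` operator norm. Finally `F 0 = 0` because `E_{α,1}(0) = 1` and
`π e = 1`.
-/

open Filter Set

namespace Real

lemma mul_Gamma_le_rpow_mul_Gamma_add {α x : ℝ} (hα0 : 0 ≤ α) (hα1 : α ≤ 1) (hx : 0 < x) :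
    x * Gamma x ≤ (x + α) ^ (1 - α) * Gamma (x + α) := by
  have hxα : 0 < x + α := by linarith
  -- `x + 1` is the point of `[x + α, x + α + 1]` with weights `α` and `1 - α`
  have hconv := convexOn_log_Gamma.2 (mem_Ioi.mpr hxα)
    (mem_Ioi.mpr (by linarith : 0 < x + α + 1)) hα0 (sub_nonneg.2 hα1) (add_sub_cancel α 1)
  have harg : α • (x + α) + (1 - α) • (x + α + 1) = x + 1 := by simp only [smul_eq_mul]; ring
  rw [harg] at hconv
  simp only [Function.comp_apply, smul_eq_mul, Gamma_add_one hx.ne',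
    Gamma_add_one hxα.ne', log_mul hx.ne' (Gamma_pos_of_pos hx).ne',
    log_mul hxα.ne' (Gamma_pos_of_pos hxα).ne'] at hconv
  rw [← log_le_log_iff (by positivity [Gamma_pos_of_pos hx])
    (mul_pos (rpow_pos_of_pos hxα _) (Gamma_pos_of_pos hxα)),
    log_mul hx.ne' (Gamma_pos_of_pos hx).ne',
    log_mul (rpow_pos_of_pos hxα _).ne' (Gamma_pos_of_pos hxα).ne', log_rpow hxα]
  linarith

lemma rpow_mul_Gamma_le_two_mul_Gamma_add {α x : ℝ} (hα0 : 0 < α) (hα1 : α ≤ 1) (hx : 1 ≤ x) :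
    x ^ α * Gamma x ≤ 2 * Gamma (x + α) := by
  have hx0 : 0 < x := by linarith
  have htwo : (x + α) ^ (1 - α) ≤ 2 * x ^ (1 - α) :=
    calc (x + α) ^ (1 - α) ≤ (2 * x) ^ (1 - α) := by gcongr; linarith
    _ = 2 ^ (1 - α) * x ^ (1 - α) := mul_rpow zero_le_two hx0.le
    _ ≤ 2 ^ (1 : ℝ) * x ^ (1 - α) := by gcongr <;> linarith
    _ = 2 * x ^ (1 - α) := by rw [rpow_one]
  have hsplit : x ^ α * x ^ (1 - α) = x := by rw [← rpow_add hx0]; norm_num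
  refine le_of_mul_le_mul_right ?_ (rpow_pos_of_pos hx0 (1 - α))
  calc x ^ α * Gamma x * x ^ (1 - α) = x ^ α * x ^ (1 - α) * Gamma x := by ring
  _ = x * Gamma x := by rw [hsplit]
  _ ≤ (x + α) ^ (1 - α) * Gamma (x + α) := mul_Gamma_le_rpow_mul_Gamma_add hα0.le hα1 hx0
  _ ≤ 2 * x ^ (1 - α) * Gamma (x + α) := by gcongr
  _ = 2 * Gamma (x + α) * x ^ (1 - α) := by ring

lemma summable_pow_mul_inv_Gamma {α : ℝ} (hα0 : 0 < α) (hα1 : α ≤ 1) (β r : ℝ) :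
    Summable fun k : ℕ => r ^ k * (Gamma (α * k + β))⁻¹ := by
  have harg : Tendsto (fun k : ℕ => α * k + β) atTop atTop :=
    tendsto_atTop_add_const_right _ β (tendsto_natCast_atTop_atTop.const_mul_atTop hα0)
  refine summable_of_ratio_norm_eventually_le (r := 1 / 2) (by norm_num) ?_
  filter_upwards [harg.eventually_ge_atTop 1,
    ((tendsto_rpow_atTop hα0).comp harg).eventually_ge_atTop (4 * |r|)] with k hk1 hk
  set y := α * k + β
  have hΓy : 0 < Gamma y := Gamma_pos_of_pos (by linarith)
  have hΓyα : 0 < Gamma (y + α) := Gamma_pos_of_pos (by linarith)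
  have hratio : |r| * Gamma y ≤ 1 / 2 * Gamma (y + α) := by
    nlinarith [rpow_mul_Gamma_le_two_mul_Gamma_add hα0 hα1 hk1,
      mul_le_mul_of_nonneg_right (show 4 * |r| ≤ y ^ α from hk) hΓy.le]
  have hsucc : α * ((k + 1 : ℕ) : ℝ) + β = y + α := by push_cast; ring
  rw [hsucc, norm_mul, norm_mul, norm_pow, norm_pow, norm_inv, norm_inv, norm_of_nonneg hΓy.le,
    norm_of_nonneg hΓyα.le, norm_eq_abs, pow_succ]
  calc |r| ^ k * |r| * (Gamma (y + α))⁻¹ = |r| ^ k * (|r| / Gamma (y + α)) := by ring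
  _ ≤ |r| ^ k * (1 / 2 / Gamma y) :=
    mul_le_mul_of_nonneg_left ((div_le_div_iff₀ hΓyα hΓy).2 (by linarith)) (by positivity)
  _ = 1 / 2 * (|r| ^ k * (Gamma y)⁻¹) := by ring

lemma hasDerivAt_inv_Gamma_add_one_mul_rpow (s : ℝ) {y : ℝ} (hy : 0 < y) :
    HasDerivAt (fun z => (Gamma (s + 1))⁻¹ * z ^ s) ((Gamma s)⁻¹ * y ^ (s - 1)) y := by
  refine ((hasDerivAt_rpow_const (Or.inl hy.ne')).const_mul _).congr_deriv ?_
  rcases eq_or_ne s 0 with rfl | hs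
  · simp [Gamma_zero]
  · rw [Gamma_add_one hs, mul_inv]
    field_simp

end Real

section MittagLeffler

variable {R : Type*}

noncomputable def mittagLeffler [Ring R] [Module ℝ R] [TopologicalSpace R] (α β : ℝ) (a : R) : R :=
  ∑' k : ℕ, (Real.Gamma (α * k + β))⁻¹ • a ^ k

lemma mittagLeffler_zero [Ring R] [Module ℝ R] [TopologicalSpace R] (α : ℝ) :
    mittagLeffler α 1 (0 : R) = 1 := by
  rw [mittagLeffler, tsum_eq_single 0 fun k hk => by rw [zero_pow hk, smul_zero]]
  simp

lemma rpow_smul_pow [Ring R] [Algebra ℝ R] {x : ℝ} (hx : 0 ≤ x) (α : ℝ) (a : R) (k : ℕ) :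
    (x ^ α • a) ^ k = x ^ (α * k) • a ^ k := by
  rw [smul_pow, ← Real.rpow_natCast, ← Real.rpow_mul hx]

variable [NormedRing R] [NormOneClass R] [NormedAlgebra ℝ R] [CompleteSpace R] {α : ℝ}

lemma hasSum_mittagLeffler (hα0 : 0 < α) (hα1 : α ≤ 1) (β : ℝ) (a : R) :
    HasSum (fun k : ℕ => (Real.Gamma (α * k + β))⁻¹ • a ^ k) (mittagLeffler α β a) := by
  refine (Summable.of_norm_bounded (Real.summable_pow_mul_inv_Gamma hα0 hα1 β ‖a‖).norm
    fun k => ?_).hasSum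
  simpa [norm_smul, mul_comm] using
    mul_le_mul_of_nonneg_left (norm_pow_le a k) (norm_nonneg (Real.Gamma (α * k + β))⁻¹)

lemma hasSum_inv_Gamma_mul_rpow_sub_one_smul_pow (hα0 : 0 < α) (hα1 : α ≤ 1) (a : R) {x : ℝ}
    (hx : 0 < x) :
    HasSum (fun k : ℕ => ((Real.Gamma (α * k))⁻¹ * x ^ (α * k - 1)) • a ^ k)
      ((x ^ (α - 1) • mittagLeffler α α (x ^ α • a)) * a) := by
  have hshift : HasSum (fun j : ℕ => ((Real.Gamma (α * ↑(j + 1)))⁻¹ * x ^ (α * ↑(j + 1) - 1)) •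
      a ^ (j + 1)) ((x ^ (α - 1) • mittagLeffler α α (x ^ α • a)) * a) := by
    refine (((hasSum_mittagLeffler hα0 hα1 α (x ^ α • a)).const_smul (x ^ (α - 1))).mul_right
      a).congr_fun fun j => ?_
    rw [rpow_smul_pow hx.le, smul_smul, smul_smul, smul_mul_assoc, ← pow_succ]
    congr 1
    rw [Nat.cast_succ, show α * (j + 1 : ℝ) - 1 = α - 1 + α * j by ring, Real.rpow_add hx,
      mul_add_one]
    ring
  have h0 : ((Real.Gamma (α * ↑(0 : ℕ)))⁻¹ * x ^ (α * ↑(0 : ℕ) - 1)) • a ^ 0 = 0 := by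
    simp [Real.Gamma_zero]
  exact (hasSum_nat_add_iff' 1).1 (by rwa [Finset.sum_range_one, h0, sub_zero])

theorem hasDerivAt_mittagLeffler_rpow_smul (hα0 : 0 < α) (hα1 : α ≤ 1) (a : R) {x : ℝ}
    (hx : 0 < x) :
    HasDerivAt (fun y => mittagLeffler α 1 (y ^ α • a))
      ((x ^ (α - 1) • mittagLeffler α α (x ^ α • a)) * a) x := by
  set U := Ioo (x / 2) (2 * x)
  have hxU : x ∈ U := ⟨by linarith, by linarith⟩
  have hU : ∀ y ∈ U, 0 < y := fun y hy => (half_pos hx).trans hy.1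
  have hterm : ∀ (k : ℕ), ∀ y ∈ U,
      HasDerivAt (fun z => ((Real.Gamma (α * k + 1))⁻¹ * z ^ (α * k)) • a ^ k)
        (((Real.Gamma (α * k))⁻¹ * y ^ (α * k - 1)) • a ^ k) y := fun k y hy =>
    (Real.hasDerivAt_inv_Gamma_add_one_mul_rpow _ (hU y hy)).smul_const _
  have hbound : ∀ (k : ℕ), ∀ y ∈ U, ‖((Real.Gamma (α * k))⁻¹ * y ^ (α * k - 1)) • a ^ k‖ ≤
      2 / x * (((2 * x) ^ α * ‖a‖) ^ k * (Real.Gamma (α * k))⁻¹) := by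
    intro k y hy
    have hy0 := hU y hy
    have hrpow : y ^ (α * k - 1) ≤ ((2 * x) ^ α) ^ k * (2 / x) :=
      calc y ^ (α * k - 1) = y ^ (α * k) / y := Real.rpow_sub_one hy0.ne' _
      _ ≤ (2 * x) ^ (α * k) / (x / 2) := by
        gcongr
        exacts [hy.2.le, hy.1.le]
      _ = ((2 * x) ^ α) ^ k * (2 / x) := by
        rw [Real.rpow_mul (by positivity), Real.rpow_natCast]
        field_simp
    calc ‖((Real.Gamma (α * k))⁻¹ * y ^ (α * k - 1)) • a ^ k‖
        = (Real.Gamma (α * k))⁻¹ * y ^ (α * k - 1) * ‖a ^ k‖ := by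
          rw [norm_smul, Real.norm_of_nonneg (by positivity)]
    _ ≤ (Real.Gamma (α * k))⁻¹ * (((2 * x) ^ α) ^ k * (2 / x)) * ‖a‖ ^ k := by
          gcongr
          exact norm_pow_le a k
    _ = 2 / x * (((2 * x) ^ α * ‖a‖) ^ k * (Real.Gamma (α * k))⁻¹) := by ring
  have hsum := (Real.summable_pow_mul_inv_Gamma hα0 hα1 0 ((2 * x) ^ α * ‖a‖)).mul_left (2 / x)
  simp only [add_zero] at hsum
  have hsum_x : Summable fun k : ℕ => ((Real.Gamma (α * k + 1))⁻¹ * x ^ (α * k)) • a ^ k := by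
    simpa [rpow_smul_pow hx.le, smul_smul] using
      (hasSum_mittagLeffler hα0 hα1 1 (x ^ α • a)).summable
  have hseries := hasDerivAt_tsum_of_isPreconnected hsum isOpen_Ioo isPreconnected_Ioo hterm
    hbound hxU hsum_x hxU
  refine (hseries.congr_of_eventuallyEq ?_).congr_deriv ?_
  · filter_upwards [Ioi_mem_nhds hx] with y hy
    exact tsum_congr fun k => by rw [rpow_smul_pow (le_of_lt hy), smul_smul]
  · exact (hasSum_inv_Gamma_mul_rpow_sub_one_smul_pow hα0 hα1 a hx).tsum_eq

end MittagLeffler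

lemma matrixML_one_zero {p : ℕ} (α : ℝ) : matrixML α 1 (0 : Matrix (Fin p) (Fin p) ℝ) = 1 :=
  mittagLeffler_zero α

lemma hasDerivAt_dotProduct_matrixML_rpow_smul_mulVec {p : ℕ} [Nonempty (Fin p)] {α : ℝ}
    (hα0 : 0 < α) (hα1 : α ≤ 1) (T : Matrix (Fin p) (Fin p) ℝ) (u v : Fin p → ℝ) {x : ℝ}
    (hx : 0 < x) :
    HasDerivAt (fun y => u ⬝ᵥ (matrixML α 1 (y ^ α • T) *ᵥ v))
      (x ^ (α - 1) * (u ⬝ᵥ (matrixML α α (x ^ α • T) *ᵥ (T *ᵥ v)))) x := by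
  let _ : NormedRing (Matrix (Fin p) (Fin p) ℝ) := Matrix.linftyOpNormedRing
  let _ : NormedAlgebra ℝ (Matrix (Fin p) (Fin p) ℝ) := Matrix.linftyOpNormedAlgebra
  let L : Matrix (Fin p) (Fin p) ℝ →L[ℝ] ℝ := LinearMap.toContinuousLinearMap
    { toFun := fun A => u ⬝ᵥ (A *ᵥ v)
      map_add' := fun A B => by simp [add_mulVec, dotProduct_add]
      map_smul' := fun r A => by simp [smul_mulVec, dotProduct_smul] }
  refine (L.hasFDerivAt.comp_hasDerivAt x
    (hasDerivAt_mittagLeffler_rpow_smul hα0 hα1 T hx)).congr_deriv ?_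
  change u ⬝ᵥ (((x ^ (α - 1) • matrixML α α (x ^ α • T)) * T) *ᵥ v) = _
  rw [smul_mul_assoc, smul_mulVec, dotProduct_smul, smul_eq_mul, mulVec_mulVec]

theorem mml_cdf_general {p : ℕ} (hp : 0 < p) (α : ℝ) (hα : α ∈ Set.Ioc (0 : ℝ) 1)
    (T : Matrix (Fin p) (Fin p) ℝ)
    (π : Fin p → ℝ) (hπ1 : ∑ i, π i = 1) :
    let t : Fin p → ℝ := -(T *ᵥ fun _ => 1)
    let F : ℝ → ℝ := fun x => 1 - π ⬝ᵥ (matrixML α 1 (x ^ α • T) *ᵥ fun _ => 1)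
    F 0 = 0 ∧ ∀ x : ℝ, 0 < x →
      HasDerivAt F (x ^ (α - 1) * (π ⬝ᵥ (matrixML α α (x ^ α • T) *ᵥ t))) x := by
  obtain ⟨hα0, hα1⟩ := hα
  have : Nonempty (Fin p) := ⟨⟨0, hp⟩⟩
  refine ⟨?_, fun x hx => ?_⟩
  · simp [Real.zero_rpow hα0.ne', matrixML_one_zero, dotProduct, hπ1]
  · refine ((hasDerivAt_dotProduct_matrixML_rpow_smul_mulVec hα0 hα1 T π _ hx).const_sub
      1).congr_deriv ?_
    simp [mulVec_neg, dotProduct_neg]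

/-- For a phase-type generator `(π, T)` with `t = -Te` and `α ∈ (0,1]`,
the function `F(x) = 1 - π E_{α,1}(T x^α) e` satisfies `F(0) = 0` and
`F'(x) = x^(α-1) π E_{α,α}(T x^α) t` for `x > 0`, i.e. `F` is the CDF of MML(α,π,T). -/
theorem mml_cdf {p : ℕ} (hp : 0 < p) (α : ℝ) (hα : α ∈ Set.Ioc (0 : ℝ) 1)
    (T : Matrix (Fin p) (Fin p) ℝ)
    (hoff : ∀ i j, i ≠ j → 0 ≤ T i j) (hdiag : ∀ i, T i i < 0)
    (hrow : ∀ i, ∑ j, T i j ≤ 0) (hinv : IsUnit T.det)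
    (π : Fin p → ℝ) (hπ : ∀ i, 0 ≤ π i) (hπ1 : ∑ i, π i = 1) :
    let t : Fin p → ℝ := -(T *ᵥ fun _ => 1)
    let F : ℝ → ℝ := fun x => 1 - π ⬝ᵥ (matrixML α 1 (x ^ α • T) *ᵥ fun _ => 1)
    F 0 = 0 ∧ ∀ x : ℝ, 0 < x →
      HasDerivAt F (x ^ (α - 1) * (π ⬝ᵥ (matrixML α α (x ^ α • T) *ᵥ t))) x :=
  mml_cdf_general hp α hα T π hπ1
end

section
/- Let W ~ PH(π, T) with density f_W(x) = π e^{Tx} t, t = −Te. Then for every ν > 0, E[W^ν] = Γ(ν + 1) · π (−T)^{-ν} e, where (−T)^{-ν} is defined via functional calculus (all eigenvalues of −T have positive real part). -/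
/-!
Write `φ x = π e^{xT} 1` for the survival function. Since `T` commutes with `e^{xT}` and
`t = -T 1`, `φ' = -π e^{xT} t`, so integrating by parts
`∫₀^∞ x^ν π e^{xT} t dx = ν ∫₀^∞ x^{ν-1} φ x dx = ν Γ(ν) π (-T)^{-ν} 1 = Γ(ν+1) π (-T)^{-ν} 1`.

Integrability and the vanishing boundary terms come from exponential decay of `e^{xT}`.
By Gershgorin's theorem an eigenvalue of a matrix with nonnegative off-diagonal entries and
nonpositive row sums is either `0` or has negative real part, and invertibility excludes `0`.
The characteristic polynomial `∏ (X - μ)` annihilates `T`; peeling off one root at a time,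
`g x = e^{xT} b` solves `g' = μ g + e^{xT} (T - μ) b`, and variation of constants bounds
`‖e^{xT}‖` by a polynomial times `e^{-δ x}`.
-/

open MeasureTheory Matrix

/-- The matrix exponential `e^A = Σ_{k≥0} A^k / k!`. -/
noncomputable def matExp {p : ℕ} (A : Matrix (Fin p) (Fin p) ℝ) :
    Matrix (Fin p) (Fin p) ℝ :=
  ∑' k : ℕ, ((k.factorial : ℝ))⁻¹ • A ^ k

open NormedSpace Asymptotics Filter Set Polynomial Topology

lemma Complex.eq_zero_of_norm_sub_le_neg {μ : ℂ} {a : ℝ} (h : ‖μ - a‖ ≤ -a) (hμ : 0 ≤ μ.re) :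
    μ = 0 := by
  have hsq : ‖μ - a‖ ^ 2 ≤ a ^ 2 := by nlinarith [norm_nonneg (μ - a)]
  rw [Complex.sq_norm, Complex.normSq_apply] at hsq
  simp only [Complex.sub_re, Complex.ofReal_re, Complex.sub_im, Complex.ofReal_im, sub_zero] at hsq
  have ha : a ≤ 0 := by linarith [norm_nonneg (μ - a)]
  apply Complex.ext <;> simp only [Complex.zero_re, Complex.zero_im] <;> nlinarith

theorem Matrix.re_neg_of_mem_spectrum_map {n : Type*} [Fintype n] [DecidableEq n]
    {T : Matrix n n ℝ} (hoff : ∀ i j, i ≠ j → 0 ≤ T i j) (hrow : ∀ i, ∑ j, T i j ≤ 0)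
    (hdet : IsUnit T.det) {μ : ℂ} (hμ : μ ∈ spectrum ℂ (T.map (algebraMap ℝ ℂ))) : μ.re < 0 := by
  by_contra! hre
  have hunit : IsUnit (T.map (algebraMap ℝ ℂ)) := by
    rw [isUnit_iff_isUnit_det, ← RingHom.mapMatrix_apply, ← RingHom.map_det]
    exact hdet.map _
  have heig : Module.End.HasEigenvalue (toLin' (T.map (algebraMap ℝ ℂ))) μ := by
    rw [Module.End.hasEigenvalue_iff_isRoot_charpoly, charpoly_toLin']
    exact mem_spectrum_iff_isRoot_charpoly.1 hμ
  obtain ⟨k, hk⟩ := eigenvalue_mem_ball heig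
  have hradius : ∑ j ∈ Finset.univ.erase k, ‖T.map (algebraMap ℝ ℂ) k j‖ ≤ -T k k := by
    rw [Finset.sum_congr rfl fun j hj => show ‖T.map (algebraMap ℝ ℂ) k j‖ = T k j by
      simp [abs_of_nonneg (hoff k j (Finset.ne_of_mem_erase hj).symm)]]
    rw [Finset.sum_erase_eq_sub (Finset.mem_univ k)]
    linarith [hrow k]
  have hμ0 : μ = 0 := Complex.eq_zero_of_norm_sub_le_neg
    (by simpa [dist_eq_norm] using (Metric.mem_closedBall.1 hk).trans hradius) hre
  exact spectrum.zero_mem_iff ℂ |>.1 (hμ0 ▸ hμ) hunit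

lemma norm_le_of_hasDerivAt_eq_smul_add {E : Type*} [NormedAddCommGroup E] [NormedSpace ℂ E]
    {g h : ℝ → E} {μ : ℂ} {δ C : ℝ} {n : ℕ}
    (hg : ∀ y, HasDerivAt g (μ • g y + h y) y) (hμ : μ.re ≤ -δ)
    (hh : ∀ y, 0 ≤ y → ‖h y‖ ≤ C * (1 + y) ^ n * Real.exp (-δ * y)) {x : ℝ} (hx : 0 ≤ x) :
    ‖g x‖ ≤ (‖g 0‖ + C) * (1 + x) ^ (n + 1) * Real.exp (-δ * x) := by
  have hC : 0 ≤ C := by simpa using (norm_nonneg _).trans (hh 0 le_rfl)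
  have norm_cexp : ∀ y : ℝ, ‖Complex.exp (-(μ * y))‖ = Real.exp (-(μ.re * y)) := by
    simp [Complex.norm_exp]
  set u : ℝ → E := fun y => Complex.exp (-(μ * y)) • g y
  have hu : ∀ y : ℝ, HasDerivAt u (Complex.exp (-(μ * y)) • h y) y := by
    intro y
    have he : HasDerivAt (fun y : ℝ => Complex.exp (-(μ * y))) (Complex.exp (-(μ * y)) * -μ) y :=
      (((hasDerivAt_id (y : ℂ)).const_mul μ).neg.cexp.comp_ofReal).congr_deriv (by simp)
    refine (he.smul (hg y)).congr_deriv ?_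
    module
  set B := C * (1 + x) ^ n * Real.exp ((-μ.re - δ) * x)
  have hu_bound : ∀ y ∈ Ico 0 x, ‖Complex.exp (-(μ * y)) • h y‖ ≤ B := by
    rintro y ⟨hy0, hyx⟩
    rw [norm_smul, norm_cexp]
    calc Real.exp (-(μ.re * y)) * ‖h y‖
        ≤ Real.exp (-(μ.re * y)) * (C * (1 + y) ^ n * Real.exp (-δ * y)) := by
          gcongr; exact hh y hy0
      _ = C * (1 + y) ^ n * Real.exp ((-μ.re - δ) * y) := by
          rw [show (-μ.re - δ) * y = -(μ.re * y) + -δ * y by ring, Real.exp_add]; ring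
      _ ≤ C * (1 + x) ^ n * Real.exp ((-μ.re - δ) * x) := by gcongr; linarith
  have hux : ‖u x - u 0‖ ≤ B * (x - 0) :=
    norm_image_sub_le_of_norm_deriv_le_segment' (fun y _ => (hu y).hasDerivWithinAt) hu_bound x
      ⟨hx, le_rfl⟩
  have hgx : ‖g x‖ = Real.exp (μ.re * x) * ‖u x‖ := by
    simp only [u, norm_smul, norm_cexp, ← mul_assoc, ← Real.exp_add, add_neg_cancel,
      Real.exp_zero, one_mul]
  have hu0 : u 0 = g 0 := by simp [u]
  have hexp : Real.exp (μ.re * x) ≤ Real.exp (-δ * x) := by gcongr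
  have hexpB : Real.exp (μ.re * x) * B = C * (1 + x) ^ n * Real.exp (-δ * x) := by
    rw [show -δ * x = μ.re * x + (-μ.re - δ) * x by ring, Real.exp_add]; ring
  have hpow : x * (1 + x) ^ n ≤ (1 + x) ^ (n + 1) := by
    rw [pow_succ']; gcongr; linarith
  have hone : 1 ≤ (1 + x) ^ (n + 1) := one_le_pow₀ (by linarith)
  calc ‖g x‖ ≤ Real.exp (μ.re * x) * (‖g 0‖ + B * x) := by
        rw [hgx, ← hu0]; gcongr
        linarith [norm_sub_norm_le (u x) (u 0), hux]
    _ = ‖g 0‖ * Real.exp (μ.re * x) + C * (x * (1 + x) ^ n) * Real.exp (-δ * x) := by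
        linear_combination x * hexpB
    _ ≤ ‖g 0‖ * ((1 + x) ^ (n + 1) * Real.exp (-δ * x))
          + C * (1 + x) ^ (n + 1) * Real.exp (-δ * x) := by
        gcongr
        exact hexp.trans (le_mul_of_one_le_left (Real.exp_pos _).le hone)
    _ = (‖g 0‖ + C) * (1 + x) ^ (n + 1) * Real.exp (-δ * x) := by ring

lemma one_add_pow_le_mul_exp (n : ℕ) {c : ℝ} (hc : 0 < c) {x : ℝ} (hx : 0 ≤ x) :
    (1 + x) ^ n ≤ n.factorial * Real.exp c / c ^ n * Real.exp (c * x) := by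
  have h := Real.pow_div_factorial_le_exp (x := c * (1 + x)) (by positivity) n
  rw [mul_pow, mul_add, mul_one, Real.exp_add, div_le_iff₀ (by positivity)] at h
  rw [div_mul_eq_mul_div, le_div_iff₀ (by positivity)]
  linarith

section BanachAlgebra

variable {𝔸 : Type*} [NormedRing 𝔸] [NormedAlgebra ℂ 𝔸] [CompleteSpace 𝔸]

lemma hasDerivAt_exp_ofReal_smul_mul (a b : 𝔸) (y : ℝ) :
    HasDerivAt (fun x : ℝ => exp ((x : ℂ) • a) * b) (exp ((y : ℂ) • a) * a * b) y := by
  simpa [Function.comp_def] using ((hasDerivAt_exp_smul_const a (y : ℂ)).mul_const b).scomp y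
    (Complex.ofRealCLM.hasDerivAt (x := y))

theorem exists_norm_exp_smul_mul_le (a : 𝔸) {δ : ℝ} (s : Multiset ℂ)
    (hs : ∀ μ ∈ s, μ.re ≤ -δ) (b : 𝔸) (hb : aeval a (s.map fun μ => X - C μ).prod * b = 0) :
    ∃ K, ∀ x : ℝ, 0 ≤ x →
      ‖exp ((x : ℂ) • a) * b‖ ≤ K * (1 + x) ^ Multiset.card s * Real.exp (-δ * x) := by
  induction s using Multiset.induction_on generalizing b with
  | empty => exact ⟨0, fun x _ => by simp_all⟩
  | cons μ s ih =>
    obtain ⟨K, hK⟩ := ih (fun ν hν => hs ν (Multiset.mem_cons_of_mem hν)) ((a - μ • 1) * b) (by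
      rw [← mul_assoc, ← hb, Multiset.map_cons, Multiset.prod_cons, mul_comm, map_mul]
      simp [Algebra.algebraMap_eq_smul_one])
    refine ⟨‖b‖ + K, fun x hx => ?_⟩
    have hderiv (y : ℝ) : HasDerivAt (fun x : ℝ => exp ((x : ℂ) • a) * b)
        (μ • (exp ((y : ℂ) • a) * b) + exp ((y : ℂ) • a) * ((a - μ • 1) * b)) y :=
      (hasDerivAt_exp_ofReal_smul_mul a b y).congr_deriv (by
        simp [mul_sub, sub_mul, mul_assoc])
    simpa using norm_le_of_hasDerivAt_eq_smul_add hderiv (hs μ (Multiset.mem_cons_self μ s)) hK hx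

theorem exists_isBigO_exp_smul (a : 𝔸) (s : Multiset ℂ) (hs : ∀ μ ∈ s, μ.re < 0)
    (ha : aeval a (s.map fun μ => X - C μ).prod = 0) :
    ∃ δ > 0, (fun x : ℝ => exp ((x : ℂ) • a)) =O[𝓟 (Ici 0)] fun x => Real.exp (-δ * x) := by
  obtain ⟨δ, hδ, hsδ⟩ : ∃ δ > 0, ∀ μ ∈ s, μ.re ≤ -δ := by
    have hsmall : ∀ᶠ δ in 𝓝[>] (0 : ℝ), ∀ μ ∈ s, μ.re ≤ -δ := by
      simp_rw [← Multiset.mem_toFinset]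
      refine (eventually_all_finset _).2 fun μ hμ => nhdsWithin_le_nhds ?_
      filter_upwards [eventually_le_nhds (neg_pos.2 (hs μ (Multiset.mem_toFinset.1 hμ)))]
        with δ hδ using by linarith
    exact (hsmall.and self_mem_nhdsWithin).exists.imp fun δ h => ⟨h.2, h.1⟩
  obtain ⟨K, hK⟩ := exists_norm_exp_smul_mul_le a s hsδ 1 (by rw [ha, zero_mul])
  set n := Multiset.card s
  refine ⟨δ / 2, half_pos hδ, isBigO_principal.2
    ⟨K * (n.factorial * Real.exp (δ / 2) / (δ / 2) ^ n), fun x (hx : 0 ≤ x) => ?_⟩⟩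
  have hK0 : 0 ≤ K := by simpa using (norm_nonneg _).trans (hK 0 le_rfl)
  calc ‖exp ((x : ℂ) • a)‖ ≤ K * (1 + x) ^ n * Real.exp (-δ * x) := by simpa using hK x hx
    _ ≤ K * (n.factorial * Real.exp (δ / 2) / (δ / 2) ^ n * Real.exp (δ / 2 * x))
          * Real.exp (-δ * x) := by
        gcongr; exact one_add_pow_le_mul_exp n (half_pos hδ) hx
    _ = _ := by
        rw [Real.norm_of_nonneg (Real.exp_pos _).le, mul_assoc, mul_assoc, ← Real.exp_add]
        ring_nf

end BanachAlgebra

section MatrixExponential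

attribute [local instance] Matrix.linftyOpNormedRing Matrix.linftyOpNormedAlgebra

theorem Matrix.exists_isBigO_exp_smul_apply {n : Type*} [Fintype n] [DecidableEq n]
    (A : Matrix n n ℂ) (hA : ∀ μ ∈ spectrum ℂ A, μ.re < 0) :
    ∃ δ > 0, ∀ i j, (fun x : ℝ => exp ((x : ℂ) • A) i j) =O[𝓟 (Ici 0)]
      fun x => Real.exp (-δ * x) := by
  have hroots : ∀ μ ∈ A.charpoly.roots, μ.re < 0 := fun μ hμ =>
    hA μ (mem_spectrum_iff_isRoot_charpoly.2 (mem_roots'.1 hμ).2)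
  have hCH : aeval A (A.charpoly.roots.map fun μ => X - C μ).prod = 0 := by
    rw [← (IsAlgClosed.splits _).eq_prod_roots_of_monic A.charpoly_monic, aeval_self_charpoly]
  obtain ⟨δ, hδ, hexp⟩ := exists_isBigO_exp_smul A _ hroots hCH
  refine ⟨δ, hδ, fun i j => (isBigO_of_le _ fun x => ?_).trans hexp⟩
  calc ‖exp ((x : ℂ) • A) i j‖ = ‖(exp ((x : ℂ) • A) *ᵥ Pi.single j 1) i‖ := by simp
    _ ≤ ‖exp ((x : ℂ) • A) *ᵥ Pi.single j 1‖ := norm_le_pi_norm _ i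
    _ ≤ ‖exp ((x : ℂ) • A)‖ * ‖(Pi.single j 1 : n → ℂ)‖ := linfty_opNorm_mulVec _ _
    _ = ‖exp ((x : ℂ) • A)‖ := by rw [Pi.norm_single, norm_one, mul_one]

variable {p : ℕ}

lemma matExp_eq_exp (A : Matrix (Fin p) (Fin p) ℝ) : matExp A = exp A := by
  rw [exp_eq_tsum ℝ]; rfl

lemma map_matExp_smul (T : Matrix (Fin p) (Fin p) ℝ) (x : ℝ) :
    (matExp (x • T)).map (algebraMap ℝ ℂ) = exp ((x : ℂ) • T.map (algebraMap ℝ ℂ)) := by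
  have hcont : Continuous ((algebraMap ℝ ℂ).mapMatrix : Matrix (Fin p) (Fin p) ℝ →+* _) :=
    continuous_id.matrix_map Complex.continuous_ofReal
  rw [matExp_eq_exp, ← RingHom.mapMatrix_apply]
  refine (map_exp _ hcont _).trans ?_
  rw [RingHom.mapMatrix_apply]
  congr 1
  ext
  simp

lemma continuous_matExp_smul (T : Matrix (Fin p) (Fin p) ℝ) :
    Continuous fun x : ℝ => matExp (x • T) := by
  simp_rw [matExp_eq_exp]
  exact exp_continuous.comp (continuous_id.smul continuous_const)

lemma hasDerivAt_dotProduct_matExp_smul_mulVec (T : Matrix (Fin p) (Fin p) ℝ) (u v : Fin p → ℝ)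
    (x : ℝ) : HasDerivAt (fun y => u ⬝ᵥ (matExp (y • T) *ᵥ v))
      (u ⬝ᵥ (matExp (x • T) *ᵥ (T *ᵥ v))) x := by
  let L : Matrix (Fin p) (Fin p) ℝ →L[ℝ] ℝ :=
    LinearMap.toContinuousLinearMap (dotProductBilin ℝ ℝ u ∘ₗ (mulVecBilin ℝ ℝ).flip v)
  simp_rw [matExp_eq_exp, mulVec_mulVec]
  exact L.hasFDerivAt.comp_hasDerivAt x (hasDerivAt_exp_smul_const T x)

end MatrixExponential

theorem exists_isBigO_matExp_smul_apply {p : ℕ} {T : Matrix (Fin p) (Fin p) ℝ}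
    (hoff : ∀ i j, i ≠ j → 0 ≤ T i j) (hrow : ∀ i, ∑ j, T i j ≤ 0) (hdet : IsUnit T.det) :
    ∃ δ > 0, ∀ i j, (fun x => matExp (x • T) i j) =O[𝓟 (Ici 0)]
      fun x => Real.exp (-δ * x) := by
  obtain ⟨δ, hδ, hexp⟩ := (T.map (algebraMap ℝ ℂ)).exists_isBigO_exp_smul_apply
    fun μ hμ => re_neg_of_mem_spectrum_map hoff hrow hdet hμ
  refine ⟨δ, hδ, fun i j => (isBigO_of_le _ fun x => ?_).trans (hexp i j)⟩
  rw [← congr_fun₂ (map_matExp_smul T x) i j]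
  simp

lemma isBigO_dotProduct_mulVec {α R m n : Type*} [NormedCommRing R] [Fintype m] [Fintype n]
    {l : Filter α} {E : α → Matrix m n R} {g : α → ℝ} (hE : ∀ i j, (fun x => E x i j) =O[l] g)
    (u : m → R) (v : n → R) : (fun x => u ⬝ᵥ (E x *ᵥ v)) =O[l] g := by
  simp only [dotProduct, mulVec, Finset.mul_sum]
  refine IsBigO.fun_sum fun i _ => IsBigO.fun_sum fun j _ => ?_
  exact ((hE i j).const_mul_left (u i * v j)).congr_left fun x => by ring

lemma integrableOn_rpow_mul_of_isBigO {a δ : ℝ} (ha : -1 < a) (hδ : 0 < δ) {F : ℝ → ℝ}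
    (hF : Continuous F) (hFO : F =O[𝓟 (Ici 0)] fun x => Real.exp (-δ * x)) :
    IntegrableOn (fun x => x ^ a * F x) (Ioi 0) := by
  obtain ⟨c, hc⟩ := isBigO_principal.1 hFO
  have hmeas : AEStronglyMeasurable (fun x : ℝ => x ^ a * F x) (volume.restrict (Ioi 0)) :=
    (ContinuousOn.mul (fun x hx => (Real.continuousAt_rpow_const x a
      (Or.inl (ne_of_gt hx))).continuousWithinAt) hF.continuousOn).aestronglyMeasurable
      measurableSet_Ioi
  refine ((integrableOn_rpow_mul_exp_neg_mul_rpow ha one_pos hδ).const_mul c).mono' hmeas ?_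
  filter_upwards [ae_restrict_mem measurableSet_Ioi] with x (hx : 0 < x)
  have hxa : 0 ≤ x ^ a := Real.rpow_nonneg hx.le a
  calc ‖x ^ a * F x‖ = x ^ a * ‖F x‖ := by rw [norm_mul, Real.norm_of_nonneg hxa]
    _ ≤ x ^ a * (c * ‖Real.exp (-δ * x)‖) := by gcongr; exact hc x (le_of_lt hx)
    _ = c * (x ^ a * Real.exp (-δ * x ^ (1 : ℝ))) := by
      rw [Real.rpow_one, Real.norm_of_nonneg (Real.exp_pos _).le]; ring

lemma tendsto_rpow_mul_of_isBigO {ν δ : ℝ} (hδ : 0 < δ) {F : ℝ → ℝ}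
    (hFO : F =O[𝓟 (Ici 0)] fun x => Real.exp (-δ * x)) :
    Tendsto (fun x => x ^ ν * F x) atTop (𝓝 0) :=
  ((isBigO_refl (fun x : ℝ => x ^ ν) atTop).mul
    (hFO.mono (le_principal_iff.2 (Ici_mem_atTop 0)))).trans_tendsto
    (tendsto_rpow_mul_exp_neg_mul_atTop_nhds_zero ν δ hδ)

theorem integral_rpow_mul_eq_of_hasDerivAt {ν δ : ℝ} (hν : 0 < ν) (hδ : 0 < δ) {φ f : ℝ → ℝ}
    (hφ : ∀ x, HasDerivAt φ (-f x) x) (hf : Continuous f)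
    (hφO : φ =O[𝓟 (Ici 0)] fun x => Real.exp (-δ * x))
    (hfO : f =O[𝓟 (Ici 0)] fun x => Real.exp (-δ * x)) :
    ∫ x in Ioi 0, x ^ ν * f x = ν * ∫ x in Ioi 0, x ^ (ν - 1) * φ x := by
  have hφc : Continuous φ := continuous_iff_continuousAt.2 fun x => (hφ x).continuousAt
  have hzero : Tendsto (fun x : ℝ => x ^ ν * φ x) (𝓝[>] 0) (𝓝 0) := by
    have := (Real.continuousAt_rpow_const 0 ν (Or.inr hν.le)).tendsto.mul (hφc.tendsto 0)
    simpa [Real.zero_rpow hν.ne'] using this.mono_left nhdsWithin_le_nhds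
  have hIBP := integral_Ioi_mul_deriv_eq_deriv_mul
    (fun x (hx : 0 < x) => Real.hasDerivAt_rpow_const (p := ν) (Or.inl hx.ne')) (fun x _ => hφ x)
    (IntegrableOn.congr_fun (integrableOn_rpow_mul_of_isBigO (a := ν) (by linarith) hδ hf hfO).neg
      (fun x _ => by simp) measurableSet_Ioi)
    (IntegrableOn.congr_fun
      ((integrableOn_rpow_mul_of_isBigO (a := ν - 1) (by linarith) hδ hφc hφO).const_mul ν)
      (fun x _ => by simp [mul_assoc]) measurableSet_Ioi)
    hzero (tendsto_rpow_mul_of_isBigO hδ hφO)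
  simp only [mul_neg, integral_neg, mul_assoc, integral_const_mul] at hIBP
  linarith

lemma dotProduct_mulVec_of_integral {α 𝕜 m n : Type*} [RCLike 𝕜] [MeasurableSpace α]
    {μ : Measure α} [Fintype m] [Fintype n] {F : α → Matrix m n 𝕜}
    (hF : ∀ i j, Integrable (fun a => F a i j) μ) (u : m → 𝕜) (v : n → 𝕜) :
    u ⬝ᵥ (Matrix.of (fun i j => ∫ a, F a i j ∂μ) *ᵥ v) = ∫ a, u ⬝ᵥ (F a *ᵥ v) ∂μ := by
  simp only [dotProduct, mulVec, of_apply, Finset.mul_sum]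
  rw [integral_finsetSum _ fun i _ => integrable_finsetSum _ fun j _ =>
    ((hF i j).mul_const (v j)).const_mul (u i)]
  refine Finset.sum_congr rfl fun i _ => ?_
  rw [integral_finsetSum _ fun j _ => ((hF i j).mul_const (v j)).const_mul (u i)]
  simp only [integral_const_mul, integral_mul_const]

theorem ph_fractional_moment_general {p : ℕ}
    (T : Matrix (Fin p) (Fin p) ℝ)
    (hoff : ∀ i j, i ≠ j → 0 ≤ T i j)
    (hrow : ∀ i, ∑ j, T i j ≤ 0) (hinv : IsUnit T.det)
    (π : Fin p → ℝ)
    (ν : ℝ) (hν : 0 < ν) :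
    let t : Fin p → ℝ := -(T *ᵥ fun _ => 1)
    -- `(-T)^{-ν}` defined entrywise by the functional-calculus integral
    let M : Matrix (Fin p) (Fin p) ℝ := Matrix.of fun i j =>
      (Real.Gamma ν)⁻¹ * ∫ s in Set.Ioi (0 : ℝ), s ^ (ν - 1) * (matExp (s • T)) i j
    ∫ x in Set.Ioi (0 : ℝ), x ^ ν * (π ⬝ᵥ (matExp (x • T) *ᵥ t))
      = Real.Gamma (ν + 1) * (π ⬝ᵥ (M *ᵥ fun _ => 1)) := by
  intro t M
  obtain ⟨δ, hδ, hE⟩ := exists_isBigO_matExp_smul_apply hoff hrow hinv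
  have hEc := continuous_matExp_smul T
  set φ := fun x : ℝ => π ⬝ᵥ (matExp (x • T) *ᵥ fun _ => 1)
  have hφ (x : ℝ) : HasDerivAt φ (-(π ⬝ᵥ (matExp (x • T) *ᵥ t))) x := by
    simpa [t, mulVec_neg] using hasDerivAt_dotProduct_matExp_smul_mulVec T π (fun _ => 1) x
  have hM : π ⬝ᵥ (M *ᵥ fun _ => 1) = (Real.Gamma ν)⁻¹ * ∫ s in Ioi 0, s ^ (ν - 1) * φ s := by
    have hMs : M = (Real.Gamma ν)⁻¹ •
        Matrix.of fun i j => ∫ s in Ioi (0 : ℝ), (s ^ (ν - 1) • matExp (s • T)) i j := rfl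
    rw [hMs, smul_mulVec, dotProduct_smul, dotProduct_mulVec_of_integral
      (F := fun s : ℝ => s ^ (ν - 1) • matExp (s • T)) (fun i j =>
        integrableOn_rpow_mul_of_isBigO (by linarith) hδ (hEc.matrix_elem i j) (hE i j))]
    simp [φ, smul_mulVec, dotProduct_smul]
  rw [integral_rpow_mul_eq_of_hasDerivAt hν hδ hφ
    (continuous_const.dotProduct (hEc.matrix_mulVec continuous_const))
    (isBigO_dotProduct_mulVec hE _ _) (isBigO_dotProduct_mulVec hE _ _), hM,
    Real.Gamma_add_one hν.ne']
  field_simp [(Real.Gamma_pos_of_pos hν).ne']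

/-- For `W ~ PH(π,T)` with density `π e^{Tx} t`, `t = -Te`, and `ν > 0`,
`E[W^ν] = Γ(ν+1) π (-T)^{-ν} e`, where `(-T)^{-ν} = Γ(ν)⁻¹ ∫_0^∞ s^{ν-1} e^{Ts} ds`. -/
theorem ph_fractional_moment {p : ℕ} (hp : 0 < p)
    (T : Matrix (Fin p) (Fin p) ℝ)
    (hoff : ∀ i j, i ≠ j → 0 ≤ T i j) (hdiag : ∀ i, T i i < 0)
    (hrow : ∀ i, ∑ j, T i j ≤ 0) (hinv : IsUnit T.det)
    (π : Fin p → ℝ) (hπ : ∀ i, 0 ≤ π i) (hπ1 : ∑ i, π i = 1)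
    (ν : ℝ) (hν : 0 < ν) :
    let t : Fin p → ℝ := -(T *ᵥ fun _ => 1)
    -- `(-T)^{-ν}` defined entrywise by the functional-calculus integral
    let M : Matrix (Fin p) (Fin p) ℝ := Matrix.of fun i j =>
      (Real.Gamma ν)⁻¹ * ∫ s in Set.Ioi (0 : ℝ), s ^ (ν - 1) * (matExp (s • T)) i j
    ∫ x in Set.Ioi (0 : ℝ), x ^ ν * (π ⬝ᵥ (matExp (x • T) *ᵥ t))
      = Real.Gamma (ν + 1) * (π ⬝ᵥ (M *ᵥ fun _ => 1)) :=
  ph_fractional_moment_general T hoff hrow hinv π ν hν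
end

section
/- Let 0 < α ≤ 1, λ > 0 and p ∈ ℕ. The MML(α, π, T) distribution with Erlang phase-type component (π = (1,0,…,0), T the p×p bidiagonal matrix with −λ on the diagonal and λ on the superdiagonal) has density f(x) = λ^p x^{αp − 1} E_{α,α}^{(p−1)}(−λ x^α) / (p−1)! for x > 0, where E_{α,α}^{(k)} denotes the k-th derivative of the scalar Mittag-Leffler function E_{α,α}. -/
/-!
Write the Erlang generator as `T = -λ • 1 + λ • N`, with `N` the nilpotent shift matrix. Then
`x ^ α • T = -c • 1 + c • N` with `c = λ x ^ α`, and by the binomial theorem the `(0, p - 1)` entry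
of its `k`-th power is `C(k, p - 1) (-c) ^ (k - p + 1) c ^ (p - 1)`. Differentiating the entire
series `E_{α,α}` termwise `n` times multiplies its `k`-th coefficient by
`k (k - 1) ⋯ (k - n + 1)`, so summing these entries against `1 / Γ(αk + α)` gives
`c ^ (p - 1) E_{α,α}^{(p - 1)}(-c) / (p - 1)!`.
Finally `π = e₀` and `t = λ e_{p-1}`, so the density is `λ x ^ (α - 1)` times that entry.
Convergence of all the series comes from `Γ(x + α) ≥ Γ(x) (x - 1) ^ α`, a consequence of the
log-convexity of `Γ`.
-/

open MeasureTheory Matrix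

/-- The scalar two-parameter Mittag-Leffler function `E_{α,β}(z) = Σ_{k≥0} z^k / Γ(αk+β)`. -/
noncomputable def scalarML (α β z : ℝ) : ℝ :=
  ∑' k : ℕ, z ^ k / Real.Gamma (α * k + β)

open Filter

namespace Real

theorem Gamma_mul_rpow_le_Gamma_add {x a : ℝ} (hx : 1 < x) (ha : 0 < a) :
    Gamma x * (x - 1) ^ a ≤ Gamma (x + a) := by
  have hx₁ : 0 < x - 1 := by linarith
  have hΓ : Gamma x = (x - 1) * Gamma (x - 1) := by
    simpa using Gamma_add_one hx₁.ne'
  have hlogΓ : (log ∘ Gamma) x - (log ∘ Gamma) (x - 1) = log (x - 1) := by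
    rw [Function.comp_apply, Function.comp_apply, hΓ,
      log_mul hx₁.ne' (Gamma_pos_of_pos hx₁).ne', add_sub_cancel_right]
  have hslope := convexOn_log_Gamma.slope_mono_adjacent (Set.mem_Ioi.2 hx₁)
    (Set.mem_Ioi.2 (by linarith : 0 < x + a)) (sub_one_lt x) (lt_add_of_pos_right x ha)
  rw [hlogΓ, sub_sub_cancel, div_one, add_sub_cancel_left, le_div_iff₀ ha] at hslope
  simp only [Function.comp_apply] at hslope
  rw [← log_le_log_iff (by positivity) (Gamma_pos_of_pos (by linarith)),
    log_mul (Gamma_pos_of_pos (by linarith)).ne' (by positivity), log_rpow hx₁]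
  linarith

end Real

open Real in
theorem summable_inv_Gamma_mul_pow {α : ℝ} (hα : 0 < α) (β r : ℝ) :
    Summable fun k : ℕ => (Gamma (α * k + β))⁻¹ * r ^ k := by
  have hlin : Tendsto (fun k : ℕ => α * k + β - 1) atTop atTop :=
    tendsto_atTop_add_const_right _ (β - 1)
      ((tendsto_natCast_atTop_atTop (R := ℝ)).const_mul_atTop hα) |>.congr fun k => by ring
  refine summable_of_ratio_norm_eventually_le (r := 1 / 2) (by norm_num) ?_
  filter_upwards [((tendsto_rpow_atTop hα).comp hlin).eventually_ge_atTop (2 * |r|),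
    hlin.eventually_gt_atTop 0] with k hgrowth hk
  simp only [Function.comp_apply] at hgrowth
  set x := α * k + β
  have hΓx : 0 < Gamma x := Gamma_pos_of_pos (by linarith)
  have hpow : 0 < (x - 1) ^ α := rpow_pos_of_pos hk α
  have hΓ : Gamma x * (x - 1) ^ α ≤ Gamma (α * ↑(k + 1) + β) := by
    simpa [x, mul_add, add_right_comm] using Gamma_mul_rpow_le_Gamma_add (x := x) (by linarith) hα
  rw [norm_mul, norm_mul, norm_inv, norm_inv, norm_pow, norm_pow, norm_eq_abs, norm_eq_abs,
    norm_eq_abs, abs_of_pos hΓx, abs_of_pos ((mul_pos hΓx hpow).trans_le hΓ), pow_succ]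
  calc (Gamma (α * ↑(k + 1) + β))⁻¹ * (|r| ^ k * |r|)
      ≤ (Gamma x * (x - 1) ^ α)⁻¹ * (|r| ^ k * ((x - 1) ^ α / 2)) := by
        gcongr; linarith
    _ = 1 / 2 * ((Gamma x)⁻¹ * |r| ^ k) := by
        field_simp

section PowerSeries

open Real

variable {a : ℕ → ℝ}

theorem summable_descFactorial_mul_abs_mul_pow_sub (ha : ∀ r, Summable fun k => a k * r ^ k)
    (n : ℕ) {R : ℝ} (hR : 1 ≤ R) :
    Summable fun k => (k.descFactorial n : ℝ) * |a k| * R ^ (k - n) := by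
  refine .of_nonneg_of_le (fun k => by positivity) (fun k => ?_)
    ((ha (2 * R)).abs.mul_left (n.factorial : ℝ))
  have hchoose : (k.choose n : ℝ) ≤ 2 ^ k := by exact_mod_cast Nat.choose_le_two_pow k n
  have hpow : R ^ (k - n) ≤ R ^ k := pow_le_pow_right₀ hR (Nat.sub_le k n)
  calc (k.descFactorial n : ℝ) * |a k| * R ^ (k - n)
      = n.factorial * (k.choose n * (|a k| * R ^ (k - n))) := by
        rw [Nat.descFactorial_eq_factorial_mul_choose]; push_cast; ring
    _ ≤ n.factorial * (2 ^ k * (|a k| * R ^ k)) := by gcongr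
    _ = n.factorial * |a k * (2 * R) ^ k| := by
        rw [abs_mul, abs_pow, abs_of_nonneg (by positivity : (0 : ℝ) ≤ 2 * R), mul_pow]; ring

theorem hasDerivAt_tsum_descFactorial_mul_pow_sub (ha : ∀ r, Summable fun k => a k * r ^ k)
    (n : ℕ) (z : ℝ) :
    HasDerivAt (fun y => ∑' k, (k.descFactorial n : ℝ) * a k * y ^ (k - n))
      (∑' k, (k.descFactorial (n + 1) : ℝ) * a k * z ^ (k - (n + 1))) z := by
  set R := |z| + 1
  have hR : 1 ≤ R := le_add_of_nonneg_left (abs_nonneg z)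
  have hz : z ∈ Metric.ball (0 : ℝ) R := by simp [R]
  have hbound : ∀ m k, ∀ y ∈ Metric.ball (0 : ℝ) R,
      ‖(k.descFactorial m : ℝ) * a k * y ^ (k - m)‖ ≤ k.descFactorial m * |a k| * R ^ (k - m) := by
    intro m k y hy
    rw [mem_ball_zero_iff, norm_eq_abs] at hy
    rw [norm_eq_abs, abs_mul, abs_mul, abs_pow, Nat.abs_cast]
    gcongr
  refine hasDerivAt_tsum_of_isPreconnected
    (summable_descFactorial_mul_abs_mul_pow_sub ha (n + 1) hR) Metric.isOpen_ball
    (convex_ball 0 R).isPreconnected (fun k y _ => ?_) (hbound (n + 1)) hz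
    (.of_norm_bounded (summable_descFactorial_mul_abs_mul_pow_sub ha n hR)
      fun k => hbound n k z hz) hz
  refine ((hasDerivAt_pow (k - n) y).const_mul ((k.descFactorial n : ℝ) * a k)).congr_deriv ?_
  rw [Nat.descFactorial_succ, ← Nat.sub_sub]
  push_cast
  ring

-- For `k < n` the exponent `k - n` truncates to `0`, harmlessly since `k.descFactorial n = 0`.
theorem iteratedDeriv_tsum_mul_pow (ha : ∀ r, Summable fun k => a k * r ^ k) (n : ℕ) :
    iteratedDeriv n (fun z => ∑' k, a k * z ^ k) =
      fun z => ∑' k, (k.descFactorial n : ℝ) * a k * z ^ (k - n) := by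
  induction n with
  | zero => simp
  | succ n ih =>
    rw [iteratedDeriv_succ, ih]
    exact funext fun z => (hasDerivAt_tsum_descFactorial_mul_pow_sub ha n z).deriv

end PowerSeries

section ShiftMatrix

variable {R : Type*} {p : ℕ}

def shiftMatrix (R : Type*) [Zero R] [One R] (p : ℕ) : Matrix (Fin p) (Fin p) R :=
  of fun i j => if (j : ℕ) = i + 1 then 1 else 0

theorem shiftMatrix_pow_apply [Semiring R] (m : ℕ) (i j : Fin p) :
    (shiftMatrix R p ^ m) i j = if (j : ℕ) = i + m then 1 else 0 := by
  induction m generalizing j with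
  | zero => simp [one_apply, Fin.ext_iff, eq_comm]
  | succ m ih =>
    rw [pow_succ, mul_apply]
    simp only [ih, ite_mul, one_mul, zero_mul]
    by_cases h : (i : ℕ) + m < p
    · rw [Finset.sum_eq_single ⟨i + m, h⟩ (fun l _ hl => if_neg (by simpa [Fin.ext_iff] using hl))
        (by simp)]
      simp [shiftMatrix, add_assoc]
    · rw [Finset.sum_eq_zero (fun l _ => if_neg (by omega)), if_neg (by omega)]

theorem smul_one_add_smul_shiftMatrix_pow_apply [CommSemiring R] (a b : R) (k : ℕ)
    {i j : Fin p} (hij : i ≤ j) :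
    ((a • 1 + b • shiftMatrix R p) ^ k) i j =
      k.choose ((j : ℕ) - i) * a ^ (k - ((j : ℕ) - i)) * b ^ ((j : ℕ) - i) := by
  rw [add_comm, ((Commute.one_right _).smul_right a).add_pow, Matrix.sum_apply]
  simp only [smul_pow, one_pow, ← nsmul_eq_mul', Matrix.mul_smul, mul_one,
    Matrix.smul_apply, shiftMatrix_pow_apply, smul_eq_mul, nsmul_eq_mul]
  have hij' : (i : ℕ) ≤ j := hij
  rw [Finset.sum_eq_single ((j : ℕ) - i) (fun m _ hm => by rw [if_neg (by omega)]; simp)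
    (fun hm => by rw [Nat.choose_eq_zero_of_lt (by simp at hm; omega)]; simp),
    if_pos (by omega)]
  ring

theorem shiftMatrix_mulVec_one [NonAssocSemiring R] (q : ℕ) (i : Fin (q + 1)) :
    (shiftMatrix R (q + 1) *ᵥ fun _ => 1) i = if i = Fin.last q then 0 else 1 := by
  simp only [mulVec, dotProduct, shiftMatrix, of_apply, mul_one]
  split_ifs with h
  · exact Finset.sum_eq_zero fun j _ => if_neg (by simp [h]; omega)
  · have hi : (i : ℕ) + 1 < q + 1 := by have := Fin.val_lt_last h; omega
    rw [Finset.sum_eq_single ⟨i + 1, hi⟩ (fun j _ hj => if_neg (by simpa [Fin.ext_iff] using hj))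
      (by simp), if_pos rfl]

end ShiftMatrix

section MittagLeffler

open Real

variable {α : ℝ}

theorem scalarML_eq_tsum (α β : ℝ) :
    scalarML α β = fun z => ∑' k : ℕ, (Gamma (α * k + β))⁻¹ * z ^ k :=
  funext fun _ => tsum_congr fun _ => div_eq_inv_mul _ _

theorem iteratedDeriv_scalarML (hα : 0 < α) (β : ℝ) (n : ℕ) (z : ℝ) :
    iteratedDeriv n (scalarML α β) z =
      ∑' k : ℕ, (k.descFactorial n : ℝ) * (Gamma (α * k + β))⁻¹ * z ^ (k - n) := by
  rw [scalarML_eq_tsum, iteratedDeriv_tsum_mul_pow (summable_inv_Gamma_mul_pow hα β)]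

attribute [local instance] Matrix.linftyOpNormedRing Matrix.linftyOpNormedAlgebra in
theorem summable_inv_Gamma_smul_pow (hα : 0 < α) (β : ℝ) {p : ℕ}
    (A : Matrix (Fin p) (Fin p) ℝ) :
    Summable fun k : ℕ => (Gamma (α * k + β))⁻¹ • A ^ k := by
  refine .of_norm_bounded_eventually_nat (summable_inv_Gamma_mul_pow hα β ‖A‖).norm ?_
  filter_upwards [eventually_gt_atTop 0] with k hk
  rw [norm_smul]
  refine (mul_le_mul_of_nonneg_left (norm_pow_le' A hk) (norm_nonneg _)).trans_eq ?_
  rw [norm_mul, norm_pow, norm_norm]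

theorem matrixML_apply (hα : 0 < α) (β : ℝ) {p : ℕ} (A : Matrix (Fin p) (Fin p) ℝ)
    (i j : Fin p) :
    matrixML α β A i j = ∑' k : ℕ, (Gamma (α * k + β))⁻¹ * (A ^ k) i j := by
  have h := (summable_inv_Gamma_smul_pow hα β A).hasSum
  exact (Pi.hasSum.1 (Pi.hasSum.1 h i) j).tsum_eq.symm

theorem matrixML_smul_one_add_smul_shiftMatrix_apply (hα : 0 < α) (β a b : ℝ) {p : ℕ}
    {i j : Fin p} (hij : i ≤ j) :
    matrixML α β (a • 1 + b • shiftMatrix ℝ p) i j =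
      b ^ ((j : ℕ) - i) * iteratedDeriv ((j : ℕ) - i) (scalarML α β) a /
        ((j : ℕ) - i).factorial := by
  rw [matrixML_apply hα, iteratedDeriv_scalarML hα, ← tsum_mul_left, ← tsum_div_const]
  refine tsum_congr fun k => ?_
  rw [smul_one_add_smul_shiftMatrix_pow_apply a b k hij, Nat.descFactorial_eq_factorial_mul_choose]
  push_cast
  field_simp

end MittagLeffler

def erlangGenerator (lam : ℝ) (p : ℕ) : Matrix (Fin p) (Fin p) ℝ :=
  of fun i j => if j = i then -lam else if (j : ℕ) = i + 1 then lam else 0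

theorem erlangGenerator_eq (lam : ℝ) (p : ℕ) :
    erlangGenerator lam p = (-lam) • 1 + lam • shiftMatrix ℝ p := by
  ext i j
  by_cases h : j = i
  · simp [erlangGenerator, h, shiftMatrix]
  · simp [erlangGenerator, h, Ne.symm h, shiftMatrix, one_apply]

theorem neg_erlangGenerator_mulVec_one (lam : ℝ) (q : ℕ) :
    -(erlangGenerator lam (q + 1) *ᵥ fun _ => 1) = Pi.single (Fin.last q) lam := by
  ext i
  rw [erlangGenerator_eq, Pi.neg_apply, add_mulVec, smul_mulVec, smul_mulVec, one_mulVec,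
    Pi.add_apply, Pi.smul_apply, Pi.smul_apply, shiftMatrix_mulVec_one]
  by_cases h : i = Fin.last q <;> simp [h]

theorem mml_erlang_density_general {p : ℕ} (hp : 0 < p) (α lam : ℝ)
    (hα : α ∈ Set.Ioc (0 : ℝ) 1) :
    let T : Matrix (Fin p) (Fin p) ℝ := Matrix.of fun i j =>
      if j = i then -lam else if (j : ℕ) = (i : ℕ) + 1 then lam else 0
    let π : Fin p → ℝ := fun i => if (i : ℕ) = 0 then 1 else 0
    let t : Fin p → ℝ := -(T *ᵥ fun _ => 1)
    ∀ x : ℝ, 0 < x →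
      x ^ (α - 1) * (π ⬝ᵥ (matrixML α α (x ^ α • T) *ᵥ t))
        = lam ^ p * x ^ (α * p - 1) *
            iteratedDeriv (p - 1) (scalarML α α) (-lam * x ^ α) / (p - 1).factorial := by
  intro T π t x hx
  obtain ⟨q, rfl⟩ : ∃ q, p = q + 1 := ⟨p - 1, by omega⟩
  have hT : T = erlangGenerator lam (q + 1) := rfl
  have hπ : π = Pi.single 0 1 := by
    ext i
    simp only [π, Pi.single_apply, Fin.ext_iff, Fin.val_zero]
  have ht : t = Pi.single (Fin.last q) lam := neg_erlangGenerator_mulVec_one lam q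
  have hA : x ^ α • T = (-lam * x ^ α) • 1 + (lam * x ^ α) • shiftMatrix ℝ (q + 1) := by
    rw [hT, erlangGenerator_eq, smul_add, smul_smul, smul_smul, mul_comm (x ^ α), mul_comm (x ^ α)]
  rw [hπ, ht, hA, single_dotProduct, one_mul, mulVec, dotProduct_single,
    matrixML_smul_one_add_smul_shiftMatrix_apply hα.1 _ _ _ (Fin.zero_le _)]
  simp only [Fin.val_last, Fin.val_zero, Nat.sub_zero, Nat.add_sub_cancel]
  have hpow : x ^ (α * ↑(q + 1) - 1) = x ^ (α - 1) * (x ^ α) ^ q := by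
    rw [← Real.rpow_natCast, ← Real.rpow_mul hx.le, ← Real.rpow_add hx]
    push_cast
    ring_nf
  rw [hpow]
  ring

/-- The MML(α,π,T) density with Erlang(p, λ) phase-type component equals
`λ^p x^(αp-1) E_{α,α}^{(p-1)}(-λ x^α) / (p-1)!`. -/
theorem mml_erlang_density {p : ℕ} (hp : 0 < p) (α lam : ℝ)
    (hα : α ∈ Set.Ioc (0 : ℝ) 1) (hlam : 0 < lam) :
    let T : Matrix (Fin p) (Fin p) ℝ := Matrix.of fun i j =>
      if j = i then -lam else if (j : ℕ) = (i : ℕ) + 1 then lam else 0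
    let π : Fin p → ℝ := fun i => if (i : ℕ) = 0 then 1 else 0
    let t : Fin p → ℝ := -(T *ᵥ fun _ => 1)
    ∀ x : ℝ, 0 < x →
      x ^ (α - 1) * (π ⬝ᵥ (matrixML α α (x ^ α • T) *ᵥ t))
        = lam ^ p * x ^ (α * p - 1) *
            iteratedDeriv (p - 1) (scalarML α α) (-lam * x ^ α) / (p - 1).factorial :=
  mml_erlang_density_general hp α lam hα
end

section
/- For 0 < α ≤ 1, β > 0, a ∈ ℝ and s > 0 with s^α > |a|, the Laplace transform identity ∫_0^∞ e^{-sx} x^{β−1} E_{α,β}(a x^α) dx = s^{-β} (1 − a s^{-α})^{-1} holds. -/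
open MeasureTheory

open Set Real

/-!
Expand `x^{β-1} E_{α,β}(a x^α)` as `∑ₖ aᵏ x^{αk+β-1} / Γ(αk+β)` and integrate term by term
against `e^{-sx}`: each term contributes `aᵏ s^{-(αk+β)}` by the Gamma integral, and the
resulting geometric series in `a s^{-α}` sums to the right-hand side. The interchange of sum and
integral is justified by the same computation with `|a|` in place of `a`, which converges because
`|a| s^{-α} < 1`.
-/

lemma integral_rpow_sub_one_mul_exp_neg_mul_Ioi {p s : ℝ} (hp : 0 < p) (hs : 0 < s) :
    ∫ x in Ioi (0 : ℝ), x ^ (p - 1) * exp (-(s * x)) = Gamma p * s ^ (-p) := by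
  rw [integral_rpow_mul_exp_neg_mul_Ioi hp hs, one_div, inv_rpow hs.le, ← rpow_neg hs.le,
    mul_comm]

lemma integrableOn_rpow_sub_one_mul_exp_neg_mul_Ioi {p s : ℝ} (hp : 0 < p) (hs : 0 < s) :
    IntegrableOn (fun x : ℝ ↦ x ^ (p - 1) * exp (-(s * x))) (Ioi 0) := by
  simpa [rpow_one, neg_mul] using
    integrableOn_rpow_mul_exp_neg_mul_rpow (by linarith : (-1 : ℝ) < p - 1) one_pos hs

theorem integral_tsum_rpow_mul_exp_neg_mul_Ioi {c p : ℕ → ℝ} {s : ℝ} (hp : ∀ k, 0 < p k)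
    (hs : 0 < s) (hsum : Summable fun k ↦ |c k| * (Gamma (p k) * s ^ (-p k))) :
    ∫ x in Ioi (0 : ℝ), ∑' k, c k * (x ^ (p k - 1) * exp (-(s * x)))
      = ∑' k, c k * (Gamma (p k) * s ^ (-p k)) := by
  have hint k : IntegrableOn (fun x : ℝ ↦ c k * (x ^ (p k - 1) * exp (-(s * x)))) (Ioi 0) :=
    (integrableOn_rpow_sub_one_mul_exp_neg_mul_Ioi (hp k) hs).const_mul _
  have hlint k : ∫⁻ x in Ioi (0 : ℝ), ‖c k * (x ^ (p k - 1) * exp (-(s * x)))‖ₑ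
      = ENNReal.ofReal (|c k| * (Gamma (p k) * s ^ (-p k))) := by
    rw [← ofReal_integral_norm_eq_lintegral_enorm (hint k),
      ← integral_rpow_sub_one_mul_exp_neg_mul_Ioi (hp k) hs, ← integral_const_mul]
    congr 1
    refine setIntegral_congr_fun measurableSet_Ioi fun x (hx : 0 < x) ↦ ?_
    rw [norm_mul, Real.norm_eq_abs, Real.norm_of_nonneg (by positivity)]
  have hfin : ∑' k, ∫⁻ x in Ioi (0 : ℝ), ‖c k * (x ^ (p k - 1) * exp (-(s * x)))‖ₑ ≠ ⊤ := by
    rw [tsum_congr hlint,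
      ← ENNReal.ofReal_tsum_of_nonneg (fun k ↦ by have := Gamma_pos_of_pos (hp k); positivity) hsum]
    exact ENNReal.ofReal_ne_top
  rw [integral_tsum (fun k ↦ (hint k).aestronglyMeasurable) hfin]
  exact tsum_congr fun k ↦ by
    rw [integral_const_mul, integral_rpow_sub_one_mul_exp_neg_mul_Ioi (hp k) hs]

lemma rpow_sub_one_mul_scalarML {x : ℝ} (hx : 0 < x) (α β a : ℝ) :
    x ^ (β - 1) * scalarML α β (a * x ^ α)
      = ∑' k : ℕ, a ^ k / Gamma (α * k + β) * x ^ (α * k + β - 1) := by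
  rw [scalarML, ← tsum_mul_left]
  refine tsum_congr fun k ↦ ?_
  rw [mul_pow, ← rpow_natCast (x ^ α), ← rpow_mul hx.le,
    show α * k + β - 1 = α * k + (β - 1) by ring, rpow_add hx]
  ring

lemma rpow_neg_mul_natCast_add {s : ℝ} (hs : 0 < s) (α β : ℝ) (k : ℕ) :
    s ^ (-(α * k + β)) = s ^ (-β) * (s ^ (-α)) ^ k := by
  rw [neg_add, rpow_add hs, ← rpow_natCast, ← rpow_mul hs.le, neg_mul, mul_comm]

/-- For `0 < α ≤ 1`, `β > 0`, `a ∈ ℝ`, `s > 0` with `s^α > |a|`,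
`∫_0^∞ e^{-sx} x^{β-1} E_{α,β}(a x^α) dx = s^{-β} (1 - a s^{-α})⁻¹`. -/
theorem ml_laplace_transform (α β a s : ℝ) (hα : α ∈ Set.Ioc (0 : ℝ) 1)
    (hβ : 0 < β) (hs : 0 < s) (ha : |a| < s ^ α) :
    ∫ x in Set.Ioi (0 : ℝ), Real.exp (-s * x) * (x ^ (β - 1) * scalarML α β (a * x ^ α))
      = s ^ (-β) * (1 - a * s ^ (-α))⁻¹ := by
  have hp (k : ℕ) : 0 < α * (k : ℝ) + β := by have := hα.1; positivity
  have hratio : |a| * s ^ (-α) < 1 := by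
    rwa [rpow_neg hs.le, ← div_eq_mul_inv, div_lt_one (rpow_pos_of_pos hs _)]
  have hterm (b : ℝ) (k : ℕ) :
      b ^ k / Gamma (α * k + β) * (Gamma (α * k + β) * s ^ (-(α * k + β)))
        = s ^ (-β) * (b * s ^ (-α)) ^ k := by
    rw [← mul_assoc, div_mul_cancel₀ _ (Gamma_pos_of_pos (hp k)).ne', rpow_neg_mul_natCast_add hs]
    ring
  have hsum : Summable fun k : ℕ ↦ |a ^ k / Gamma (α * k + β)| *
      (Gamma (α * k + β) * s ^ (-(α * k + β))) := by
    simp_rw [abs_div, abs_pow, abs_of_pos (Gamma_pos_of_pos (hp _)), hterm]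
    exact (summable_geometric_of_lt_one (by positivity) hratio).mul_left _
  calc ∫ x in Ioi (0 : ℝ), exp (-s * x) * (x ^ (β - 1) * scalarML α β (a * x ^ α))
      = ∫ x in Ioi (0 : ℝ), ∑' k : ℕ, a ^ k / Gamma (α * k + β)
          * (x ^ (α * k + β - 1) * exp (-(s * x))) := by
        refine setIntegral_congr_fun measurableSet_Ioi fun x (hx : 0 < x) ↦ ?_
        rw [rpow_sub_one_mul_scalarML hx, ← tsum_mul_left, neg_mul]
        exact tsum_congr fun k ↦ by ring
    _ = ∑' k : ℕ, s ^ (-β) * (a * s ^ (-α)) ^ k := by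
        rw [integral_tsum_rpow_mul_exp_neg_mul_Ioi hp hs hsum]
        exact tsum_congr (hterm a)
    _ = s ^ (-β) * (1 - a * s ^ (-α))⁻¹ := by
        rw [tsum_mul_left, tsum_geometric_of_abs_lt_one]
        rwa [abs_mul, abs_of_pos (rpow_pos_of_pos hs _)]
end

section
/- For 0 < α ≤ 1, β > 0, m ≥ 1 and x > 0, the identity (d^m/dx^m)[x^{β−1} E_{α,β}(x^α)] = x^{β−m−1} E_{α,β−m}(x^α) holds, where E_{α,γ}(z) = Σ_{k≥0} z^k/Γ(αk+γ) (with the convention 1/Γ(n) = 0 for nonpositive integers n). -/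
open Filter Real Set
open scoped Nat

lemma rpow_sub_one_le_exp_mul_Gamma_add_one {s t : ℝ} (hs : 1 ≤ s) (ht : 1 ≤ t) :
    s ^ (t - 1) ≤ exp s * Gamma (t + 1) := by
  set n := ⌊t⌋₊
  have hnt : (n : ℝ) ≤ t := Nat.floor_le (by linarith)
  have htn : t < n + 1 := Nat.lt_floor_add_one t
  have hn : (1 : ℝ) ≤ n := by exact_mod_cast Nat.le_floor (by exact_mod_cast ht)
  calc s ^ (t - 1) ≤ s ^ (n : ℝ) := rpow_le_rpow_of_exponent_le hs (by linarith)
    _ = s ^ n := rpow_natCast s n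
    _ ≤ exp s * n ! :=
      (div_le_iff₀ (by positivity)).mp (pow_div_factorial_le_exp s (by linarith) n)
    _ = exp s * Gamma (n + 1) := by rw [Gamma_nat_eq_factorial]
    _ ≤ exp s * Gamma (t + 1) := by
      gcongr
      exact Gamma_strictMonoOn_Ici.monotoneOn (by simp; linarith) (by simp; linarith)
        (by linarith)

lemma rpow_div_Gamma_add_one_le {y s t : ℝ} (hy : 0 ≤ y) (hs : 1 ≤ s) (ht : 1 ≤ t) :
    y ^ t / Gamma (t + 1) ≤ exp s * s * (y / s) ^ t := by
  have hs0 : 0 < s := by linarith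
  have hΓ := rpow_sub_one_le_exp_mul_Gamma_add_one hs ht
  have hΓ0 : 0 < Gamma (t + 1) := Gamma_pos_of_pos (by linarith)
  rw [rpow_sub hs0, rpow_one, div_le_iff₀ hs0] at hΓ
  rw [div_rpow hy hs0.le, div_le_iff₀ hΓ0]
  calc y ^ t = y ^ t / s ^ t * s ^ t := by field_simp
    _ ≤ y ^ t / s ^ t * (exp s * Gamma (t + 1) * s) := by gcongr
    _ = exp s * s * (y ^ t / s ^ t) * Gamma (t + 1) := by ring

lemma div_Gamma_add_one (s : ℝ) : s / Gamma (s + 1) = (Gamma s)⁻¹ := by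
  rcases eq_or_ne s 0 with rfl | hs
  · simp
  · rw [Gamma_add_one hs, div_mul_cancel_left₀ hs]

lemma rpow_le_rpow_add_rpow_of_mem_Icc {a b y : ℝ} (e : ℝ) (ha : 0 < a) (hy : y ∈ Icc a b) :
    y ^ e ≤ a ^ e + b ^ e := by
  have hb : 0 ≤ b ^ e := rpow_nonneg (by linarith [hy.1, hy.2]) e
  rcases le_total 0 e with he | he
  · linarith [rpow_le_rpow (by linarith [hy.1]) hy.2 he, rpow_nonneg ha.le e]
  · linarith [rpow_le_rpow_of_nonpos ha hy.1 he]

noncomputable def mlTerm (α γ : ℝ) (k : ℕ) (y : ℝ) : ℝ :=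
  y ^ (α * k + γ - 1) / Gamma (α * k + γ)

lemma summable_abs_mlTerm {α : ℝ} (hα : 0 < α) (γ : ℝ) {y : ℝ} (hy : 0 < y) :
    Summable fun k => |mlTerm α γ k y| := by
  set s := 2 * y + 1
  have hs : 1 ≤ s := by linarith
  have hq : (y / s) ^ α < 1 :=
    rpow_lt_one (by positivity) ((div_lt_one (by positivity)).2 (by linarith)) hα
  have hlarge : ∀ᶠ k : ℕ in atTop, 2 ≤ α * k + γ :=
    ((tendsto_natCast_atTop_atTop.const_mul_atTop hα).atTop_add
      tendsto_const_nhds).eventually_ge_atTop 2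
  refine .of_norm_bounded_eventually_nat ((summable_geometric_of_lt_one (by positivity) hq).mul_left
    (exp s * s * (y / s) ^ (γ - 1))) ?_
  filter_upwards [hlarge] with k hk
  have hpow : (y / s) ^ (α * k + γ - 1) = (y / s) ^ (γ - 1) * ((y / s) ^ α) ^ k := by
    rw [← rpow_natCast, ← rpow_mul (by positivity), ← rpow_add (by positivity)]
    ring_nf
  have hΓ := rpow_div_Gamma_add_one_le hy.le hs (t := α * k + γ - 1) (by linarith)
  rw [sub_add_cancel, hpow] at hΓ
  rw [norm_abs_eq_norm, Real.norm_eq_abs, mlTerm, abs_of_nonneg (div_nonneg (by positivity)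
    (Gamma_nonneg_of_nonneg (by linarith)))]
  linarith

lemma hasDerivAt_mlTerm (α γ : ℝ) (k : ℕ) {y : ℝ} (hy : 0 < y) :
    HasDerivAt (mlTerm α γ k) (mlTerm α (γ - 1) k y) y := by
  have h := (hasDerivAt_rpow_const (p := α * k + γ - 1) (Or.inl hy.ne')).div_const
    (Gamma (α * k + γ))
  refine h.congr_deriv ?_
  have hΓ := div_Gamma_add_one (α * k + γ - 1)
  rw [sub_add_cancel] at hΓ
  rw [mlTerm, mul_comm, mul_div_assoc, hΓ, add_sub_assoc', sub_sub, div_eq_mul_inv]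

lemma abs_mlTerm_le_of_mem_Icc (α γ : ℝ) (k : ℕ) {a b y : ℝ} (ha : 0 < a) (hy : y ∈ Icc a b) :
    |mlTerm α γ k y| ≤ |mlTerm α γ k a| + |mlTerm α γ k b| := by
  have hb : 0 < b := ha.trans_le (hy.1.trans hy.2)
  simp only [mlTerm, abs_div, abs_of_pos (rpow_pos_of_pos ha _), abs_of_pos (rpow_pos_of_pos hb _),
    abs_of_pos (rpow_pos_of_pos (ha.trans_le hy.1) _), ← add_div]
  gcongr
  exact rpow_le_rpow_add_rpow_of_mem_Icc _ ha hy

noncomputable def mlSeries (α γ y : ℝ) : ℝ :=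
  ∑' k : ℕ, mlTerm α γ k y

lemma mlSeries_eq (α γ : ℝ) {y : ℝ} (hy : 0 < y) :
    mlSeries α γ y = y ^ (γ - 1) * scalarML α γ (y ^ α) := by
  rw [scalarML, ← tsum_mul_left]
  refine tsum_congr fun k => ?_
  rw [mlTerm, ← rpow_natCast, ← rpow_mul hy.le, mul_div_assoc', ← rpow_add hy]
  ring_nf

lemma hasDerivAt_mlSeries {α : ℝ} (hα : 0 < α) (γ : ℝ) {x : ℝ} (hx : 0 < x) :
    HasDerivAt (mlSeries α γ) (mlSeries α (γ - 1) x) x := by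
  have hx2 : 0 < x / 2 := by positivity
  have hsub : Ioo (x / 2) (2 * x) ⊆ Icc (x / 2) (2 * x) := Ioo_subset_Icc_self
  refine hasDerivAt_tsum_of_isPreconnected
    ((summable_abs_mlTerm hα (γ - 1) hx2).add (summable_abs_mlTerm hα (γ - 1) (by positivity)))
    isOpen_Ioo isPreconnected_Ioo (fun k y hy => hasDerivAt_mlTerm α γ k (hx2.trans hy.1))
    (fun k y hy => abs_mlTerm_le_of_mem_Icc α (γ - 1) k hx2 (hsub hy))
    (y₀ := x) ⟨by linarith, by linarith⟩ (summable_abs_mlTerm hα γ hx).of_abs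
    ⟨by linarith, by linarith⟩

lemma iteratedDeriv_mlSeries {α : ℝ} (hα : 0 < α) (m : ℕ) (γ : ℝ) {x : ℝ} (hx : 0 < x) :
    iteratedDeriv m (mlSeries α γ) x = mlSeries α (γ - m) x := by
  induction m generalizing γ x with
  | zero => simp
  | succ m ih =>
    have hderiv : deriv (mlSeries α γ) =ᶠ[nhds x] mlSeries α (γ - 1) := by
      filter_upwards [isOpen_Ioi.mem_nhds hx] with y hy
      exact (hasDerivAt_mlSeries hα γ hy).deriv
    rw [iteratedDeriv_succ', hderiv.iteratedDeriv_eq, ih _ hx, Nat.cast_succ, sub_sub, add_comm]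

theorem ml_derivative_identity_general (α β : ℝ) (hα : α ∈ Set.Ioc (0 : ℝ) 1)
    (m : ℕ) :
    ∀ x : ℝ, 0 < x →
      iteratedDeriv m (fun y : ℝ => y ^ (β - 1) * scalarML α β (y ^ α)) x
        = x ^ (β - m - 1) * scalarML α (β - m) (x ^ α) := by
  intro x hx
  have hseries : (fun y : ℝ => y ^ (β - 1) * scalarML α β (y ^ α)) =ᶠ[nhds x] mlSeries α β := by
    filter_upwards [isOpen_Ioi.mem_nhds hx] with y hy
    exact (mlSeries_eq α β hy).symm
  rw [hseries.iteratedDeriv_eq, iteratedDeriv_mlSeries hα.1 m β hx, mlSeries_eq α _ hx]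

/-- For `0 < α ≤ 1`, `β > 0`, `m ≥ 1` and `x > 0`,
`(d^m/dx^m)[x^{β-1} E_{α,β}(x^α)] = x^{β-m-1} E_{α,β-m}(x^α)`. -/
theorem ml_derivative_identity (α β : ℝ) (hα : α ∈ Set.Ioc (0 : ℝ) 1) (hβ : 0 < β)
    (m : ℕ) (hm : 1 ≤ m) :
    ∀ x : ℝ, 0 < x →
      iteratedDeriv m (fun y : ℝ => y ^ (β - 1) * scalarML α β (y ^ α)) x
        = x ^ (β - m - 1) * scalarML α (β - m) (x ^ α) :=
  ml_derivative_identity_general α β hα m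
end
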